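/- arXiv:2510.06662 — 8 statements merged into one kernel-verified Lean document; each statement's English description precedes it below -/
import Mathlib

section
/- Let D ≥ 1 and let H̃ : ([0,1]^d)^T → ℝ be given by H̃(X) = F̃₀(min_{t∈S_1} f̃_1(x(t)), …, min_{t∈S_D} f̃_D(x(t))), where each S_i ⊆ {1,…,T} has |S_i| ≥ T/4, each f̃_i : [0,1]^d → [0,1] is merely continuous, and F̃₀ : [0,1]^D → ℝ is continuous. Then for every ε > 0 there exists H ∈ F_D^{d,T}, using the same subsets S_1,…,S_D, such that max over X ∈ ([0,1]^d)^T of |H(X) − H̃(X)| ≤ ε. Consequently the closures in the uniform norm of the restricted class and of this relaxed class coincide. -/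
open Set

/-- The cube `[0,1]^n` inside `Fin n → ℝ`. -/
def cube (n : ℕ) : Set (Fin n → ℝ) := {x | ∀ i, x i ∈ Icc (0 : ℝ) 1}

/-- The input space `([0,1]^d)^T` of sequences of length `T` of points in `[0,1]^d`. -/
def seqCube (d T : ℕ) : Set (Fin T → Fin d → ℝ) := {X | ∀ t, X t ∈ cube d}

/-!
Smooth the `f̃ᵢ` and `F̃₀` uniformly on the cubes (Tietze extension, then smooth approximation).
To create a unique nondegenerate minimizer, pick a point `aᵢ` where the smoothed `qᵢ` is within `δ`
of its minimum `m`, replace `qᵢ` by `m` on a small ball around `aᵢ` with a bump function, and add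
the bowl `θ |x - aᵢ|²`; this moves `qᵢ` by at most `δ`. The near-minimizers of `qᵢ` form a nonempty
relatively open, hence infinite, subset of the connected cube, so the `aᵢ` can be chosen pairwise
distinct. Finally, minima over the `Sᵢ` are `1`-Lipschitz in the sup norm, and `F̃₀` is uniformly
continuous on `[0,1]^D`.
-/

open Topology Metric

theorem exists_injective_forall_mem_of_infinite {ι α : Type*} [Fintype ι] {G : ι → Set α}
    (hG : ∀ i, (G i).Infinite) : ∃ a : ι → α, Function.Injective a ∧ ∀ i, a i ∈ G i := by
  classical
  choose t htG ht using fun i => (hG i).exists_subset_card_eq (Fintype.card ι)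
  obtain ⟨a, ha, hat⟩ := (Finset.all_card_le_biUnion_card_iff_exists_injective t).mp fun s => by
    rcases s.eq_empty_or_nonempty with rfl | ⟨i, hi⟩
    · simp
    calc s.card ≤ Fintype.card ι := s.card_le_univ
      _ = (t i).card := (ht i).symm
      _ ≤ (s.biUnion t).card := Finset.card_le_card (Finset.subset_biUnion_of_mem t hi)
  exact ⟨a, ha, fun i => htG i (hat i)⟩

theorem IsPreconnected.infinite_inter_of_isOpen {X : Type*} [TopologicalSpace X] [T1Space X]
    {s U : Set X} (hs : IsPreconnected s) (hs' : s.Nontrivial) (hU : IsOpen U)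
    (hsU : (s ∩ U).Nonempty) : (s ∩ U).Infinite := by
  obtain ⟨x, hxs, hxU⟩ := hsU
  have : ConnectedSpace s := Subtype.connectedSpace ⟨⟨x, hxs⟩, hs⟩
  have : Nontrivial s := hs'.coe_sort
  have hV : (Subtype.val ⁻¹' U : Set s).Infinite :=
    infinite_of_mem_nhds (⟨x, hxs⟩ : s) ((hU.preimage continuous_subtype_val).mem_nhds hxU)
  rw [← Subtype.image_preimage_coe]
  exact hV.image Subtype.val_injective.injOn

theorem ContinuousOn.exists_contDiff_abs_sub_lt {E : Type*} [NormedAddCommGroup E]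
    [NormedSpace ℝ E] [FiniteDimensional ℝ E] {K : Set E} {g : E → ℝ} (hg : ContinuousOn g K)
    (hK : IsClosed K) (k : ℕ∞) {ε : ℝ} (hε : 0 < ε) :
    ∃ P : E → ℝ, ContDiff ℝ k P ∧ ∀ x ∈ K, |P x - g x| < ε := by
  obtain ⟨G, hG⟩ := ContinuousMap.exists_restrict_eq hK ⟨K.domRestrict g, hg.domRestrict⟩
  obtain ⟨P, hP, hPG, -⟩ := G.continuous.exists_contDiff_approx k continuous_const fun _ => hε
  refine ⟨P, hP, fun x hx => ?_⟩
  have hGx : G x = g x := DFunLike.congr_fun hG ⟨x, hx⟩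
  simpa [Real.dist_eq, hGx] using hPG x

theorem ContinuousOn.exists_contDiff_mem_Icc_abs_sub_le {E : Type*} [NormedAddCommGroup E]
    [NormedSpace ℝ E] [FiniteDimensional ℝ E] {K : Set E} {g : E → ℝ} (hg : ContinuousOn g K)
    (hK : IsClosed K) (hg01 : ∀ x ∈ K, g x ∈ Icc (0 : ℝ) 1) (k : ℕ∞) {δ : ℝ} (hδ : 0 < δ)
    (hδ3 : δ ≤ 1 / 3) :
    ∃ q : E → ℝ, ContDiff ℝ k q ∧ ∀ x ∈ K, q x ∈ Icc 0 (1 - δ) ∧ |q x - g x| ≤ 4 * δ := by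
  -- squeeze `g` into `[δ, 1 - 2δ]` first, so that the approximant lies in `[0, 1 - δ]`
  have hg' : ContinuousOn (fun x => δ + (1 - 3 * δ) * g x) K :=
    continuousOn_const.add (continuousOn_const.mul hg)
  obtain ⟨q, hq, hqg⟩ := hg'.exists_contDiff_abs_sub_lt hK k hδ
  refine ⟨q, hq, fun x hx => ?_⟩
  obtain ⟨hg0, hg1⟩ := hg01 x hx
  obtain ⟨hlo, hhi⟩ := abs_lt.mp (hqg x hx)
  refine ⟨⟨?_, ?_⟩, abs_le.mpr ⟨?_, ?_⟩⟩ <;> nlinarith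

theorem Finset.abs_inf'_sub_inf'_le {β : Type*} {s : Finset β} (hs : s.Nonempty) {g h : β → ℝ}
    {c : ℝ} (hc : ∀ t ∈ s, |g t - h t| ≤ c) : |s.inf' hs g - s.inf' hs h| ≤ c := by
  rw [abs_sub_le_iff]
  constructor
  · have : s.inf' hs g - c ≤ s.inf' hs h := Finset.le_inf' hs _ fun t ht => by
      linarith [Finset.inf'_le g ht, (abs_le.mp (hc t ht)).2]
    linarith
  · have : s.inf' hs h - c ≤ s.inf' hs g := Finset.le_inf' hs _ fun t ht => by
      linarith [Finset.inf'_le h ht, (abs_le.mp (hc t ht)).1]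
    linarith

theorem iteratedFDeriv_apply_const_eq_iteratedDeriv {𝕜 E F : Type*} [NontriviallyNormedField 𝕜]
    [NormedAddCommGroup E] [NormedSpace 𝕜 E] [NormedAddCommGroup F] [NormedSpace 𝕜 F]
    {g : E → F} {k : ℕ} (hg : ContDiff 𝕜 k g) (a v : E) :
    iteratedFDeriv 𝕜 k g a (fun _ => v) = iteratedDeriv k (fun t : 𝕜 => g (a + t • v)) 0 := by
  let L : 𝕜 →L[𝕜] E := (ContinuousLinearMap.id 𝕜 𝕜).smulRight v
  have hgL : (fun t : 𝕜 => g (a + t • v)) = (fun z => g (a + z)) ∘ L := rfl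
  rw [iteratedDeriv_eq_iteratedFDeriv, hgL,
    L.iteratedFDeriv_comp_right (f := fun z => g (a + z))
      (hg.comp (contDiff_const.add contDiff_id)) 0 le_rfl,
    iteratedFDeriv_comp_add_left]
  simp [L]

theorem cube_eq_pi (n : ℕ) : cube n = univ.pi fun _ => Icc (0 : ℝ) 1 := by
  ext x; simp only [cube, mem_univ_pi, mem_ofPred_eq]

theorem isCompact_cube (n : ℕ) : IsCompact (cube n) := by
  rw [cube_eq_pi]; exact isCompact_univ_pi fun _ => isCompact_Icc

theorem convex_cube (n : ℕ) : Convex ℝ (cube n) := by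
  rw [cube_eq_pi]; exact convex_pi fun _ _ => convex_Icc 0 1

theorem uniqueDiffOn_cube (n : ℕ) : UniqueDiffOn ℝ (cube n) := by
  rw [cube_eq_pi]; exact UniqueDiffOn.univ_pi fun _ => uniqueDiffOn_Icc_zero_one

theorem zero_mem_cube (n : ℕ) : (0 : Fin n → ℝ) ∈ cube n := fun _ => by simp

theorem one_mem_cube (n : ℕ) : (1 : Fin n → ℝ) ∈ cube n := fun _ => by simp

theorem cube_nontrivial {n : ℕ} (hn : 1 ≤ n) : (cube n).Nontrivial :=
  ⟨0, zero_mem_cube n, 1, one_mem_cube n, fun h => zero_ne_one (congrFun h ⟨0, hn⟩)⟩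

section sqDist

variable {n : ℕ}

def sqDist (a x : Fin n → ℝ) : ℝ := ∑ j, (x j - a j) ^ 2

theorem contDiff_sqDist (a : Fin n → ℝ) {k : WithTop ℕ∞} : ContDiff ℝ k (sqDist a) := by
  unfold sqDist; fun_prop

theorem sqDist_nonneg (a x : Fin n → ℝ) : 0 ≤ sqDist a x :=
  Finset.sum_nonneg fun _ _ => sq_nonneg _

theorem sqDist_eq_zero_iff {a x : Fin n → ℝ} : sqDist a x = 0 ↔ x = a := by
  rw [sqDist, Finset.sum_eq_zero_iff_of_nonneg fun _ _ => sq_nonneg _]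
  simp [sub_eq_zero, funext_iff]

theorem sqDist_self (a : Fin n → ℝ) : sqDist a a = 0 := sqDist_eq_zero_iff.mpr rfl

theorem sqDist_le_of_mem_cube {a x : Fin n → ℝ} (ha : a ∈ cube n) (hx : x ∈ cube n) :
    sqDist a x ≤ n := by
  calc sqDist a x ≤ ∑ _j : Fin n, (1 : ℝ) := Finset.sum_le_sum fun j _ => by
        obtain ⟨ha0, ha1⟩ := ha j
        obtain ⟨hx0, hx1⟩ := hx j
        nlinarith
    _ = n := by simp

theorem iteratedFDeriv_two_const_add_mul_sqDist_self (a v : Fin n → ℝ) (c θ : ℝ) :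
    iteratedFDeriv ℝ 2 (fun x => c + θ * sqDist a x) a ![v, v] = 2 * θ * ∑ j, v j ^ 2 := by
  have hvv : ![v, v] = fun _ => v := by ext i; fin_cases i <;> rfl
  have hline : (fun t : ℝ => c + θ * sqDist a (a + t • v)) =
      fun t => c + θ * (∑ j, v j ^ 2) * t ^ 2 := by
    ext t; simp only [sqDist, Pi.add_apply, Pi.smul_apply, smul_eq_mul, add_sub_cancel_left,
      mul_pow, ← Finset.mul_sum]
    ring
  rw [hvv, iteratedFDeriv_apply_const_eq_iteratedDeriv
    (contDiff_const.add (contDiff_const.mul (contDiff_sqDist a))), hline]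
  simp [iteratedDeriv_succ]
  ring

end sqDist

section bowl

variable {n : ℕ} {a : Fin n → ℝ} (q : (Fin n → ℝ) → ℝ) (m θ : ℝ) (φ : ContDiffBump a)

/-- `q` flattened to the value `m` on the bump around `a`, plus the bowl `θ · |x - a|²`. -/
noncomputable def bowl (x : Fin n → ℝ) : ℝ := q x - φ x * (q x - m) + θ * sqDist a x

variable {q m θ φ}

theorem contDiff_bowl {k : ℕ∞} (hq : ContDiff ℝ k q) : ContDiff ℝ k (bowl q m θ φ) :=
  (hq.sub (φ.contDiff.mul (hq.sub contDiff_const))).add (contDiff_const.mul (contDiff_sqDist a))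

theorem bowl_eventuallyEq : bowl q m θ φ =ᶠ[𝓝 a] fun x => m + θ * sqDist a x := by
  filter_upwards [closedBall_mem_nhds a φ.rIn_pos] with x hx
  rw [bowl, φ.one_of_mem_closedBall hx]
  ring

theorem bowl_self : bowl q m θ φ a = m := by
  rw [bowl_eventuallyEq.eq_of_nhds, sqDist_self, mul_zero, add_zero]

theorem add_mul_sqDist_le_bowl {x : Fin n → ℝ} (hx : m ≤ q x) :
    m + θ * sqDist a x ≤ bowl q m θ φ x := by
  have : φ x * (q x - m) ≤ q x - m := mul_le_of_le_one_left (sub_nonneg.mpr hx) φ.le_one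
  rw [bowl]; linarith

theorem bowl_le {x : Fin n → ℝ} (hx : m ≤ q x) : bowl q m θ φ x ≤ q x + θ * sqDist a x := by
  have : 0 ≤ φ x * (q x - m) := mul_nonneg φ.nonneg (sub_nonneg.mpr hx)
  rw [bowl]; linarith

theorem sub_add_mul_sqDist_le_bowl {x : Fin n → ℝ} {δ : ℝ} (hδ : 0 ≤ δ) (hx : m ≤ q x)
    (hxδ : dist x a < φ.rOut → q x ≤ m + δ) : q x - δ + θ * sqDist a x ≤ bowl q m θ φ x := by
  have : φ x * (q x - m) ≤ δ := by
    by_cases hxa : dist x a < φ.rOut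
    · have := hxδ hxa
      exact (mul_le_of_le_one_left (sub_nonneg.mpr hx) φ.le_one).trans (by linarith)
    · rw [φ.zero_of_le_dist (not_lt.mp hxa), zero_mul]; exact hδ
  rw [bowl]; linarith

theorem iteratedFDeriv_two_bowl_self (v : Fin n → ℝ) :
    iteratedFDeriv ℝ 2 (bowl q m θ φ) a ![v, v] = 2 * θ * ∑ j, v j ^ 2 := by
  rw [(bowl_eventuallyEq.iteratedFDeriv ℝ 2).eq_of_nhds,
    iteratedFDeriv_two_const_add_mul_sqDist_self]

end bowl

structure IsNondegenerateMinOn {E : Type*} [NormedAddCommGroup E] [NormedSpace ℝ E]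
    (f : E → ℝ) (s : Set E) (a : E) : Prop where
  mem : a ∈ s
  le : ∀ x ∈ s, f a ≤ f x
  eq_of_eq : ∀ x ∈ s, f x = f a → x = a
  hessian_pos : ∀ v : E, v ≠ 0 → 0 < iteratedFDerivWithin ℝ 2 f s a ![v, v]

theorem exists_contDiff_isNondegenerateMinOn_near {n : ℕ} {q : (Fin n → ℝ) → ℝ}
    {x₀ a : Fin n → ℝ} {δ : ℝ} (hq : ContDiff ℝ 2 q)
    (hq01 : ∀ x ∈ cube n, q x ∈ Icc 0 (1 - δ)) (hx₀ : x₀ ∈ cube n) (hmin : IsMinOn q (cube n) x₀)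
    (ha : a ∈ cube n) (hqa : q a < q x₀ + δ) :
    ∃ f : (Fin n → ℝ) → ℝ, ContDiff ℝ 2 f ∧ (∀ x ∈ cube n, f x ∈ Icc 0 1) ∧
      IsNondegenerateMinOn f (cube n) a ∧ ∀ x ∈ cube n, |f x - q x| ≤ δ := by
  set m := q x₀
  have hm : ∀ x ∈ cube n, m ≤ q x := fun x hx => hmin hx
  have hδ : 0 < δ := by linarith [hm a ha]
  obtain ⟨ρ, hρ, hball⟩ := Metric.eventually_nhds_iff.mp
    (hq.continuous.continuousAt.eventually (gt_mem_nhds hqa))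
  let φ : ContDiffBump a := ⟨ρ / 2, ρ, half_pos hρ, half_lt_self hρ⟩
  set θ := δ / (n + 1)
  have hθ : 0 < θ := by positivity
  have hθsq : ∀ x ∈ cube n, θ * sqDist a x ≤ δ := fun x hx =>
    calc θ * sqDist a x ≤ θ * (n + 1) := by
          gcongr; linarith [sqDist_le_of_mem_cube ha hx]
      _ = δ := div_mul_cancel₀ δ (by positivity)
  have hlow : ∀ x ∈ cube n, m + θ * sqDist a x ≤ bowl q m θ φ x :=
    fun x hx => add_mul_sqDist_le_bowl (hm x hx)
  refine ⟨bowl q m θ φ, contDiff_bowl hq, fun x hx => ⟨?_, ?_⟩, ⟨ha, ?_, ?_, ?_⟩, fun x hx => ?_⟩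
  · linarith [hlow x hx, (hq01 x₀ hx₀).1, mul_nonneg hθ.le (sqDist_nonneg a x)]
  · linarith [bowl_le (θ := θ) (φ := φ) (hm x hx), hθsq x hx, (hq01 x hx).2]
  · intro x hx
    rw [bowl_self]
    linarith [hlow x hx, mul_nonneg hθ.le (sqDist_nonneg a x)]
  · intro x hx hxa
    rw [bowl_self] at hxa
    have : θ * sqDist a x ≤ 0 := by linarith [hlow x hx]
    exact sqDist_eq_zero_iff.mp (le_antisymm (nonpos_of_mul_nonpos_right this hθ)
      (sqDist_nonneg a x))
  · intro v hv
    rw [iteratedFDerivWithin_eq_iteratedFDeriv (uniqueDiffOn_cube n)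
      (contDiff_bowl hq).contDiffAt ha, iteratedFDeriv_two_bowl_self]
    obtain ⟨j, hj⟩ := Function.ne_iff.mp hv
    have : 0 < ∑ j, v j ^ 2 :=
      Finset.sum_pos' (fun _ _ => sq_nonneg _) ⟨j, Finset.mem_univ j, pow_two_pos_of_ne_zero hj⟩
    positivity
  · have hup := bowl_le (θ := θ) (φ := φ) (hm x hx)
    have hdown := sub_add_mul_sqDist_le_bowl (θ := θ) (φ := φ) hδ.le (hm x hx) fun h => (hball h).le
    exact abs_le.mpr ⟨by linarith [mul_nonneg hθ.le (sqDist_nonneg a x)],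
      by linarith [hθsq x hx]⟩

theorem exists_isNondegenerateMinOn_approx {n : ℕ} (hn : 1 ≤ n) {ι : Type*} [Fintype ι]
    {g : ι → (Fin n → ℝ) → ℝ} (hg : ∀ i, ContinuousOn (g i) (cube n))
    (hg01 : ∀ i, ∀ x ∈ cube n, g i x ∈ Icc (0 : ℝ) 1) {η : ℝ} (hη : 0 < η) :
    ∃ (f : ι → (Fin n → ℝ) → ℝ) (a : ι → Fin n → ℝ), Function.Injective a ∧
      (∀ i, ContDiff ℝ 2 (f i)) ∧ (∀ i, ∀ x ∈ cube n, f i x ∈ Icc 0 1) ∧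
      (∀ i, IsNondegenerateMinOn (f i) (cube n) (a i)) ∧
      ∀ i, ∀ x ∈ cube n, |f i x - g i x| ≤ η := by
  set δ := min (η / 5) (1 / 3)
  have hδ : 0 < δ := by positivity
  choose q hq hqg using fun i => (hg i).exists_contDiff_mem_Icc_abs_sub_le
    (isCompact_cube n).isClosed (hg01 i) 2 hδ (min_le_right _ _)
  choose x₀ hx₀ hmin using fun i => (isCompact_cube n).exists_isMinOn
    ⟨0, zero_mem_cube n⟩ (hq i).continuous.continuousOn
  obtain ⟨a, ha, haq⟩ := exists_injective_forall_mem_of_infinite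
    (G := fun i => cube n ∩ {x | q i x < q i (x₀ i) + δ}) fun i =>
      (convex_cube n).isPreconnected.infinite_inter_of_isOpen (cube_nontrivial hn)
        (isOpen_lt (hq i).continuous continuous_const) ⟨x₀ i, hx₀ i, by simpa using hδ⟩
  choose f hf hf01 hfmin hfq using fun i => exists_contDiff_isNondegenerateMinOn_near (hq i)
    (fun x hx => (hqg i x hx).1) (hx₀ i) (hmin i) (haq i).1 (haq i).2
  refine ⟨f, a, ha, hf, hf01, hfmin, fun i x hx => ?_⟩
  calc |f i x - g i x| ≤ |f i x - q i x| + |q i x - g i x| := abs_sub_le _ _ _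
    _ ≤ δ + 4 * δ := add_le_add (hfq i x hx) (hqg i x hx).2
    _ ≤ η := by linarith [min_le_left (η / 5) (1 / 3)]

theorem inf'_mem_cube {D T : ℕ} {S : Fin D → Finset (Fin T)} (hS : ∀ i, (S i).Nonempty)
    {g : Fin D → Fin T → ℝ} (hg : ∀ i t, g i t ∈ Icc (0 : ℝ) 1) :
    (fun i => (S i).inf' (hS i) (g i)) ∈ cube D := fun i => by
  obtain ⟨t, -, ht⟩ := (S i).exists_mem_eq_inf' (hS i) (g i)
  show (S i).inf' (hS i) (g i) ∈ Icc 0 1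
  rw [ht]
  exact hg i t

theorem relaxed_class_closure_equivalence_general (d T D : ℕ) (hd : 1 ≤ d)
    (S : Fin D → Finset (Fin T))
    (hS : ∀ i, (S i).Nonempty)
    (ft : Fin D → (Fin d → ℝ) → ℝ) (hft : ∀ i, ContinuousOn (ft i) (cube d))
    (hft01 : ∀ i, ∀ x ∈ cube d, ft i x ∈ Icc (0 : ℝ) 1)
    (Ft₀ : (Fin D → ℝ) → ℝ) (hFt₀ : ContinuousOn Ft₀ (cube D))
    (Ht : (Fin T → Fin d → ℝ) → ℝ)
    (hHt : ∀ X ∈ seqCube d T,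
      Ht X = Ft₀ (fun i => (S i).inf' (hS i) (fun t => ft i (X t))))
    (ε : ℝ) (hε : 0 < ε) :
    ∃ (f : Fin D → (Fin d → ℝ) → ℝ) (xm : Fin D → (Fin d → ℝ)) (F₀ : (Fin D → ℝ) → ℝ),
      (∀ i, ContDiffOn ℝ 2 (f i) (cube d)) ∧
      (∀ i, ∀ x ∈ cube d, f i x ∈ Icc (0 : ℝ) 1) ∧
      (∀ i, xm i ∈ cube d) ∧
      (∀ i, ∀ x ∈ cube d, f i (xm i) ≤ f i x) ∧
      (∀ i, ∀ x ∈ cube d, f i x = f i (xm i) → x = xm i) ∧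
      Function.Injective xm ∧
      (∀ i, ∀ v : Fin d → ℝ, v ≠ 0 →
        0 < iteratedFDerivWithin ℝ 2 (f i) (cube d) (xm i) ![v, v]) ∧
      ContDiffOn ℝ 1 F₀ (cube D) ∧
      (∀ X ∈ seqCube d T,
        |F₀ (fun i => (S i).inf' (hS i) (fun t => f i (X t))) - Ht X| ≤ ε) := by
  obtain ⟨δ, hδ, hFt₀δ⟩ := Metric.uniformContinuousOn_iff.mp
    ((isCompact_cube D).uniformContinuousOn_of_continuous hFt₀) (ε / 2) (half_pos hε)
  obtain ⟨f, xm, hxm, hf, hf01, hfmin, hfft⟩ :=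
    exists_isNondegenerateMinOn_approx hd hft hft01 (half_pos hδ)
  obtain ⟨F₀, hF₀, hF₀Ft₀⟩ :=
    hFt₀.exists_contDiff_abs_sub_lt (isCompact_cube D).isClosed 1 (half_pos hε)
  refine ⟨f, xm, F₀, fun i => (hf i).contDiffOn, hf01, fun i => (hfmin i).mem,
    fun i => (hfmin i).le, fun i => (hfmin i).eq_of_eq, hxm, fun i => (hfmin i).hessian_pos,
    hF₀.contDiffOn, fun X hX => ?_⟩
  set y : Fin D → ℝ := fun i => (S i).inf' (hS i) fun t => f i (X t)
  set z : Fin D → ℝ := fun i => (S i).inf' (hS i) fun t => ft i (X t)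
  have hy : y ∈ cube D := inf'_mem_cube hS fun i t => hf01 i (X t) (hX t)
  have hz : z ∈ cube D := inf'_mem_cube hS fun i t => hft01 i (X t) (hX t)
  have hyz : dist y z < δ := (dist_pi_lt_iff hδ).mpr fun i => by
    rw [Real.dist_eq]
    exact (Finset.abs_inf'_sub_inf'_le (hS i) fun t _ => hfft i (X t) (hX t)).trans_lt
      (half_lt_self hδ)
  have hFt₀yz := hFt₀δ y hy z hz hyz
  rw [Real.dist_eq] at hFt₀yz
  rw [hHt X hX]
  calc |F₀ y - Ft₀ z| ≤ |F₀ y - Ft₀ y| + |Ft₀ y - Ft₀ z| := abs_sub_le _ _ _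
    _ ≤ ε / 2 + ε / 2 := add_le_add (hF₀Ft₀ y hy).le hFt₀yz.le
    _ = ε := add_halves ε

/-- relaxed class and closure equivalence: if
`H̃(X) = F̃₀(min_{t∈S₁} f̃₁(x(t)), …, min_{t∈S_D} f̃_D(x(t)))` with each `Sᵢ ⊆ {1,…,T}`
of cardinality `≥ T/4`, each `f̃ᵢ : [0,1]^d → [0,1]` merely continuous, and
`F̃₀ : [0,1]^D → ℝ` continuous, then for each `ε > 0` there is an `H` in the restricted
class `F_D^{d,T}` — using the same subsets `S₁, …, S_D`, with `fᵢ : [0,1]^d → [0,1]` of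
class `C²` having unique, pairwise distinct global minimizers with positive definite
Hessians, and `F₀` of class `C¹` — that is uniformly `ε`-close to `H̃` on `([0,1]^d)^T`. -/
theorem relaxed_class_closure_equivalence (d T D : ℕ) (hd : 1 ≤ d) (hT : 1 ≤ T) (hD : 1 ≤ D)
    (S : Fin D → Finset (Fin T)) (hcard : ∀ i, (T : ℝ) / 4 ≤ ((S i).card : ℝ))
    (hS : ∀ i, (S i).Nonempty)
    (ft : Fin D → (Fin d → ℝ) → ℝ) (hft : ∀ i, ContinuousOn (ft i) (cube d))
    (hft01 : ∀ i, ∀ x ∈ cube d, ft i x ∈ Icc (0 : ℝ) 1)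
    (Ft₀ : (Fin D → ℝ) → ℝ) (hFt₀ : ContinuousOn Ft₀ (cube D))
    (Ht : (Fin T → Fin d → ℝ) → ℝ)
    (hHt : ∀ X ∈ seqCube d T,
      Ht X = Ft₀ (fun i => (S i).inf' (hS i) (fun t => ft i (X t))))
    (ε : ℝ) (hε : 0 < ε) :
    ∃ (f : Fin D → (Fin d → ℝ) → ℝ) (xm : Fin D → (Fin d → ℝ)) (F₀ : (Fin D → ℝ) → ℝ),
      (∀ i, ContDiffOn ℝ 2 (f i) (cube d)) ∧
      (∀ i, ∀ x ∈ cube d, f i x ∈ Icc (0 : ℝ) 1) ∧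
      (∀ i, xm i ∈ cube d) ∧
      (∀ i, ∀ x ∈ cube d, f i (xm i) ≤ f i x) ∧
      (∀ i, ∀ x ∈ cube d, f i x = f i (xm i) → x = xm i) ∧
      Function.Injective xm ∧
      (∀ i, ∀ v : Fin d → ℝ, v ≠ 0 →
        0 < iteratedFDerivWithin ℝ 2 (f i) (cube d) (xm i) ![v, v]) ∧
      ContDiffOn ℝ 1 F₀ (cube D) ∧
      (∀ X ∈ seqCube d T,
        |F₀ (fun i => (S i).inf' (hS i) (fun t => f i (X t))) - Ht X| ≤ ε) :=
  relaxed_class_closure_equivalence_general d T D hd S hS ft hft hft01 Ft₀ hFt₀ Ht hHt ε hε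
end

section
/- For every continuous function F : ([0,1]^d)^T → ℝ and every ε > 0 there exist an integer D ≥ 1, subsets S_1,…,S_D ⊆ {1,…,T} with |S_i| ≥ T/4, continuous functions f̃_1,…,f̃_D : [0,1]^d → [0,1], and a continuous function F̃₀ : [0,1]^D → ℝ such that max over X = (x(1),…,x(T)) ∈ ([0,1]^d)^T of |F(X) − F̃₀(min_{t∈S_1} f̃_1(x(t)), …, min_{t∈S_D} f̃_D(x(t)))| ≤ ε. -/
open Set

/-!
Stone–Weierstrass. The functions `X ↦ F₀(φ₁(X), …, φ_D(X))` with min-pooled features `φᵢ`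
contain the constants and are closed under sums and products (concatenate the feature lists),
so they form a subalgebra of `C(([0,1]^d)^T, ℝ)`. It separates points: if `X ≠ Y`, some set
`S` of at least `⌈T/4⌉` positions has `X(S) ≠ Y(S)`, and a continuous `f : E → [0,1]` vanishing
at a point of one image and equal to `1` on the (finite, closed) other image yields a feature
taking the value `0` at one sequence and `1` at the other.
-/

theorem exists_le_card_image_ne_image {ι α : Type*} [Fintype ι] {k : ℕ} {X Y : ι → α}
    (hXY : X ≠ Y) (hk : 3 * k ≤ Fintype.card ι + 2) :
    ∃ S : Finset ι, k ≤ S.card ∧ X '' S ≠ Y '' S := by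
  classical
  obtain ⟨t₀, ht₀⟩ := Function.ne_iff.mp hXY
  set p := X t₀
  set q := Y t₀
  -- `X` meets `p` at `t₀` and `Y` avoids it on `S₁`; symmetrically for `q` on `S₂`;
  -- on the rest `X ≡ q` and `Y ≡ p`.
  set S₁ := Finset.univ.filter fun s => Y s ≠ p
  set S₂ := Finset.univ.filter fun s => X s ≠ q
  by_cases h₁ : k ≤ S₁.card
  · refine ⟨S₁, h₁, fun h => ?_⟩
    obtain ⟨s, hs, hYs⟩ : p ∈ Y '' S₁ := h ▸ ⟨t₀, by simpa [S₁] using Ne.symm ht₀, rfl⟩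
    exact (Finset.mem_filter.mp hs).2 hYs
  by_cases h₂ : k ≤ S₂.card
  · refine ⟨S₂, h₂, fun h => ?_⟩
    obtain ⟨s, hs, hXs⟩ : q ∈ X '' S₂ := h.symm ▸ ⟨t₀, by simpa [S₂] using ht₀, rfl⟩
    exact (Finset.mem_filter.mp hs).2 hXs
  set S₃ := (S₁ ∪ S₂)ᶜ
  have hS₃ : k ≤ S₃.card := by
    have := Finset.card_union_le S₁ S₂
    rw [Finset.card_compl]
    omega
  obtain ⟨s, hs⟩ : S₃.Nonempty := Finset.card_pos.mp (by omega)
  refine ⟨S₃, hS₃, fun h => ht₀ ?_⟩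
  have hmem : ∀ s ∈ S₃, Y s = p ∧ X s = q := fun s hs => by simpa [S₃, S₁, S₂] using hs
  obtain ⟨s', hs', hs'eq⟩ : X s ∈ Y '' S₃ := h ▸ ⟨s, hs, rfl⟩
  rw [← (hmem s hs).2, ← hs'eq, (hmem s' hs').1]

/-- The min-pooled feature `X ↦ min_{t ∈ S} f(X t)` of the paper, with `S = positions`. -/
structure MinPoolFeature (ι E : Type*) [TopologicalSpace E] (k : ℕ) where
  positions : Finset ι
  positions_nonempty : positions.Nonempty
  le_card_positions : k ≤ positions.card
  toFun : E → ℝ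
  continuous_toFun : Continuous toFun
  toFun_mem_Icc : ∀ x, toFun x ∈ Icc (0 : ℝ) 1

namespace MinPoolFeature

variable {ι E : Type*} [TopologicalSpace E] {k : ℕ}

def eval (φ : MinPoolFeature ι E k) (X : ι → E) : ℝ :=
  φ.positions.inf' φ.positions_nonempty fun t => φ.toFun (X t)

theorem continuous_eval (φ : MinPoolFeature ι E k) : Continuous φ.eval :=
  Continuous.finset_inf'_apply φ.positions_nonempty fun t _ =>
    φ.continuous_toFun.comp (continuous_apply t)

theorem eval_eq_zero (φ : MinPoolFeature ι E k) {X : ι → E}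
    (h : ∃ t ∈ φ.positions, φ.toFun (X t) = 0) : φ.eval X = 0 := by
  obtain ⟨t, ht, hX⟩ := h
  exact le_antisymm (Finset.inf'_le_of_le _ ht hX.le)
    (Finset.le_inf' _ _ fun s _ => (φ.toFun_mem_Icc _).1)

theorem eval_eq_one (φ : MinPoolFeature ι E k) {X : ι → E}
    (h : ∀ t ∈ φ.positions, φ.toFun (X t) = 1) : φ.eval X = 1 := by
  obtain ⟨t, ht⟩ := φ.positions_nonempty
  exact le_antisymm (Finset.inf'_le_of_le _ ht (h t ht).le)
    (Finset.le_inf' _ _ fun s hs => (h s hs).ge)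

theorem exists_eval_ne [T35Space E] {S : Finset ι} (hS : k ≤ S.card) {X Y : ι → E}
    (h : X '' S ≠ Y '' S) : ∃ φ : MinPoolFeature ι E k, φ.eval X ≠ φ.eval Y := by
  wlog hp : ∃ p ∈ X '' S, p ∉ Y '' S generalizing X Y
  · have hsub : X '' S ⊆ Y '' S := fun p hpX => by_contra fun hpY => hp ⟨p, hpX, hpY⟩
    obtain ⟨φ, hφ⟩ := this h.symm (Set.exists_of_ssubset (hsub.ssubset_of_ne h))
    exact ⟨φ, hφ.symm⟩
  obtain ⟨_, ⟨s, hs, rfl⟩, hXs⟩ := hp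
  obtain ⟨f, hf, hf0, hf1⟩ := CompletelyRegularSpace.completely_regular (X s) (Y '' S)
    (S.finite_toSet.image Y).isClosed hXs
  let φ : MinPoolFeature ι E k :=
    ⟨S, ⟨s, hs⟩, hS, fun x => f x, continuous_subtype_val.comp hf, fun x => (f x).2⟩
  refine ⟨φ, ?_⟩
  rw [φ.eval_eq_zero ⟨s, hs, congrArg Subtype.val hf0⟩,
    φ.eval_eq_one fun t ht => congrArg Subtype.val (hf1 ⟨t, ht, rfl⟩)]
  exact zero_ne_one

end MinPoolFeature

section RelaxedRetrieval

variable {ι E : Type*} [TopologicalSpace E] {k : ℕ}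

def IsRelaxedRetrieval (k : ℕ) (g : (ι → E) → ℝ) : Prop :=
  ∃ (D : ℕ) (φ : Fin D → MinPoolFeature ι E k) (F₀ : (Fin D → ℝ) → ℝ),
    1 ≤ D ∧ Continuous F₀ ∧ g = fun X => F₀ fun i => (φ i).eval X

theorem MinPoolFeature.isRelaxedRetrieval_eval (φ : MinPoolFeature ι E k) :
    IsRelaxedRetrieval k φ.eval :=
  ⟨1, fun _ => φ, fun z => z 0, le_rfl, continuous_apply 0, rfl⟩

theorem MinPoolFeature.nonempty [Fintype ι] [Nonempty ι] (hk : k ≤ Fintype.card ι) :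
    Nonempty (MinPoolFeature ι E k) :=
  ⟨⟨Finset.univ, Finset.univ_nonempty, hk, fun _ => 0, continuous_const,
    fun _ => ⟨le_rfl, zero_le_one⟩⟩⟩

theorem isRelaxedRetrieval_const [Nonempty (MinPoolFeature ι E k)] (c : ℝ) :
    IsRelaxedRetrieval (ι := ι) (E := E) k fun _ => c :=
  ⟨1, fun _ => Classical.arbitrary _, fun _ => c, le_rfl, continuous_const, rfl⟩

theorem IsRelaxedRetrieval.comp₂ {g h : (ι → E) → ℝ} (op : ℝ → ℝ → ℝ)
    (hop : Continuous (Function.uncurry op)) (hg : IsRelaxedRetrieval k g)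
    (hh : IsRelaxedRetrieval k h) : IsRelaxedRetrieval k fun X => op (g X) (h X) := by
  obtain ⟨D₁, φ₁, F₁, hD₁, hF₁, rfl⟩ := hg
  obtain ⟨D₂, φ₂, F₂, -, hF₂, rfl⟩ := hh
  refine ⟨D₁ + D₂, Fin.append φ₁ φ₂,
    fun z => op (F₁ fun i => z (Fin.castAdd D₂ i)) (F₂ fun j => z (Fin.natAdd D₁ j)),
    by omega, ?_, ?_⟩
  · exact hop.comp ((hF₁.comp (by fun_prop)).prodMk (hF₂.comp (by fun_prop)))
  · simp [Fin.append_left, Fin.append_right]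

variable [Nonempty (MinPoolFeature ι E k)]

variable (ι E k) in
def relaxedRetrievalSubalgebra : Subalgebra ℝ C(ι → E, ℝ) where
  carrier := {g | IsRelaxedRetrieval k g}
  mul_mem' hg hh := hg.comp₂ _ continuous_mul hh
  add_mem' hg hh := hg.comp₂ _ continuous_add hh
  algebraMap_mem' c := isRelaxedRetrieval_const c

theorem relaxedRetrievalSubalgebra_separatesPoints [Fintype ι] [T35Space E]
    (hk : 3 * k ≤ Fintype.card ι + 2) : (relaxedRetrievalSubalgebra ι E k).SeparatesPoints := by
  intro X Y hXY
  obtain ⟨S, hS, hXY⟩ := exists_le_card_image_ne_image hXY hk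
  obtain ⟨φ, hφ⟩ := MinPoolFeature.exists_eval_ne hS hXY
  exact ⟨_, ⟨⟨φ.eval, φ.continuous_eval⟩, φ.isRelaxedRetrieval_eval, rfl⟩, hφ⟩

end RelaxedRetrieval

theorem ContinuousMap.exists_mem_subalgebra_near_continuousOn_of_isCompact_of_separatesPoints
    {X : Type*} [TopologicalSpace X] {A : Subalgebra ℝ C(X, ℝ)} (hA : A.SeparatesPoints)
    {K : Set X} (hK : IsCompact K) {f : X → ℝ} (hf : ContinuousOn f K) {ε : ℝ} (hε : 0 < ε) :
    ∃ g ∈ A, ∀ x ∈ K, |g x - f x| < ε := by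
  have : CompactSpace K := isCompact_iff_compactSpace.mp hK
  let restrictK : C(X, ℝ) →ₐ[ℝ] C(K, ℝ) := compRightAlgHom ℝ ℝ ⟨Subtype.val, continuous_subtype_val⟩
  have hAK : (A.map restrictK).SeparatesPoints := by
    intro x y hxy
    obtain ⟨_, ⟨g, hgA, rfl⟩, hg⟩ := hA (Subtype.coe_ne_coe.mpr hxy)
    exact ⟨_, ⟨restrictK g, Subalgebra.mem_map.mpr ⟨g, hgA, rfl⟩, rfl⟩, hg⟩
  obtain ⟨⟨_, hgK⟩, hg⟩ :=
    exists_mem_subalgebra_near_continuous_of_separatesPoints _ hAK _ hf.domRestrict ε hε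
  obtain ⟨g, hgA, rfl⟩ := Subalgebra.mem_map.mp hgK
  exact ⟨g, hgA, fun x hx => hg ⟨x, hx⟩⟩

theorem exists_isRelaxedRetrieval_near {ι E : Type*} [Fintype ι] [Nonempty ι]
    [TopologicalSpace E] [T35Space E] {k : ℕ} (hk : 3 * k ≤ Fintype.card ι + 2)
    {K : Set (ι → E)} (hK : IsCompact K) {F : (ι → E) → ℝ} (hF : ContinuousOn F K)
    {ε : ℝ} (hε : 0 < ε) : ∃ g, IsRelaxedRetrieval k g ∧ ∀ X ∈ K, |F X - g X| < ε := by
  have : Nonempty (MinPoolFeature ι E k) :=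
    MinPoolFeature.nonempty (by have := Fintype.card_pos (α := ι); omega)
  obtain ⟨g, hg, hgF⟩ :=
    ContinuousMap.exists_mem_subalgebra_near_continuousOn_of_isCompact_of_separatesPoints
      (relaxedRetrievalSubalgebra_separatesPoints hk) hK hF hε
  exact ⟨g, hg, fun X hX => abs_sub_comm (F X) (g X) ▸ hgF X hX⟩

theorem isCompact_seqCube (d T : ℕ) : IsCompact (seqCube d T) := by
  have : seqCube d T = Icc 0 1 := by
    ext X
    simp [seqCube, cube, Pi.le_def, forall_and]
  exact this ▸ isCompact_Icc

theorem density_of_relaxed_retrieval_class_general (d T : ℕ) (hT : 1 ≤ T)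
    (F : (Fin T → Fin d → ℝ) → ℝ) (hF : ContinuousOn F (seqCube d T))
    (ε : ℝ) (hε : 0 < ε) :
    ∃ D : ℕ, 1 ≤ D ∧
      ∃ (S : Fin D → Finset (Fin T)) (hS : ∀ i, (S i).Nonempty)
        (f : Fin D → (Fin d → ℝ) → ℝ) (F₀ : (Fin D → ℝ) → ℝ),
        (∀ i, (T : ℝ) / 4 ≤ ((S i).card : ℝ)) ∧
        (∀ i, ContinuousOn (f i) (cube d)) ∧
        (∀ i, ∀ x ∈ cube d, f i x ∈ Icc (0 : ℝ) 1) ∧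
        ContinuousOn F₀ (cube D) ∧
        (∀ X ∈ seqCube d T,
          |F X - F₀ (fun i => (S i).inf' (hS i) (fun t => f i (X t)))| ≤ ε) := by
  have : Nonempty (Fin T) := ⟨⟨0, hT⟩⟩
  -- `(T + 3) / 4 = ⌈T / 4⌉`, and `3 * ⌈T / 4⌉ ≤ T + 2` for every `T`.
  obtain ⟨_, ⟨D, φ, F₀, hD, hF₀, rfl⟩, hg⟩ :=
    exists_isRelaxedRetrieval_near (k := (T + 3) / 4) (by simp only [Fintype.card_fin]; omega)
      (isCompact_seqCube d T) hF hε
  refine ⟨D, hD, fun i => (φ i).positions, fun i => (φ i).positions_nonempty,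
    fun i => (φ i).toFun, F₀, fun i => ?_, fun i => (φ i).continuous_toFun.continuousOn,
    fun i x _ => (φ i).toFun_mem_Icc x, hF₀.continuousOn, fun X hX => (hg X hX).le⟩
  have : T ≤ 4 * (φ i).positions.card := by have := (φ i).le_card_positions; omega
  rw [div_le_iff₀ four_pos]
  exact_mod_cast this.trans_eq (mul_comm _ _)

/-- density of the relaxed retrieval class: for `4 ∣ T`, every continuous
`F : ([0,1]^d)^T → ℝ` can be uniformly `ε`-approximated by
`X ↦ F̃₀(min_{t∈S₁} f̃₁(x(t)), …, min_{t∈S_D} f̃_D(x(t)))` for some `D ≥ 1`, subsets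
`Sᵢ ⊆ {1,…,T}` with `|Sᵢ| ≥ T/4`, continuous `f̃ᵢ : [0,1]^d → [0,1]`, and continuous
`F̃₀ : [0,1]^D → ℝ`. -/
theorem density_of_relaxed_retrieval_class (d T : ℕ) (hd : 1 ≤ d) (hT : 1 ≤ T)
    (hdvd : 4 ∣ T)
    (F : (Fin T → Fin d → ℝ) → ℝ) (hF : ContinuousOn F (seqCube d T))
    (ε : ℝ) (hε : 0 < ε) :
    ∃ D : ℕ, 1 ≤ D ∧
      ∃ (S : Fin D → Finset (Fin T)) (hS : ∀ i, (S i).Nonempty)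
        (f : Fin D → (Fin d → ℝ) → ℝ) (F₀ : (Fin D → ℝ) → ℝ),
        (∀ i, (T : ℝ) / 4 ≤ ((S i).card : ℝ)) ∧
        (∀ i, ContinuousOn (f i) (cube d)) ∧
        (∀ i, ∀ x ∈ cube d, f i x ∈ Icc (0 : ℝ) 1) ∧
        ContinuousOn F₀ (cube D) ∧
        (∀ X ∈ seqCube d T,
          |F X - F₀ (fun i => (S i).inf' (hS i) (fun t => f i (X t)))| ≤ ε) :=
  density_of_relaxed_retrieval_class_general d T hT F hF ε hε
end

section
/- Let T ≥ 4 with 4 dividing T, and set m = T/4. For x ∈ [0,1]^T and t ∈ {1,…,T} define Y_t(x) = min{x_t, v_m(x)} and ζ_t(x) = max{x_t, w_m(x)}, and for q > 0 define the smooth selector x̂_q(t) = [e^{q(ζ_t(x) − w_m(x))²} · ζ_t(x) + e^{q(Y_t(x) − v_m(x))²} · Y_t(x)] / [e^{q(ζ_t(x) − w_m(x))²} + e^{q(Y_t(x) − v_m(x))²}]. Then x̂_q(t) → x_t uniformly: for every ε > 0 there exists q₀ > 0 such that for all q ≥ q₀, all x ∈ [0,1]^T, and all t ∈ {1,…,T},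 |x̂_q(t) − x_t| ≤ ε. -/
/-- The list of values of `a : Fin T → ℝ` sorted in ascending order. -/
noncomputable def ascList {T : ℕ} (a : Fin T → ℝ) : List ℝ :=
  Multiset.sort (Finset.univ.val.map a) (· ≤ ·)

/-- The `m`-th largest value of `a : Fin T → ℝ` (counted with multiplicity), for `1 ≤ m ≤ T`. -/
noncomputable def kthLargest {T : ℕ} (a : Fin T → ℝ) (m : ℕ) : ℝ :=
  (ascList a).getD (T - m) 0

/-- The `m`-th smallest value of `a : Fin T → ℝ` (counted with multiplicity), for `1 ≤ m ≤ T`. -/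
noncomputable def kthSmallest {T : ℕ} (a : Fin T → ℝ) (m : ℕ) : ℝ :=
  (ascList a).getD (m - 1) 0

/-- `Y_t(x) = min (x t) (v_m x)` where `v_m` is the `m`-th largest value. -/
noncomputable def selY {T : ℕ} (m : ℕ) (x : Fin T → ℝ) (t : Fin T) : ℝ :=
  min (x t) (kthLargest x m)

/-- `ζ_t(x) = max (x t) (w_m x)` where `w_m` is the `m`-th smallest value. -/
noncomputable def selZ {T : ℕ} (m : ℕ) (x : Fin T → ℝ) (t : Fin T) : ℝ :=
  max (x t) (kthSmallest x m)

/-- The smooth selector `x̂_q(t)`. -/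
noncomputable def smoothSelector {T : ℕ} (m : ℕ) (q : ℝ) (x : Fin T → ℝ) (t : Fin T) : ℝ :=
  (Real.exp (q * (selZ m x t - kthSmallest x m) ^ 2) * selZ m x t
      + Real.exp (q * (selY m x t - kthLargest x m) ^ 2) * selY m x t)
    / (Real.exp (q * (selZ m x t - kthSmallest x m) ^ 2)
      + Real.exp (q * (selY m x t - kthLargest x m) ^ 2))

/-! The order statistics `w_m ≤ v_m` are read off the sorted list at positions `m - 1 ≤ T - m`.
For `y = x t` inside `[w_m, v_m]` the selector is exactly `y`. Outside, it is an average of `y`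
and the nearer endpoint in which the
endpoint carries weight `1` and `y` a weight at least `exp (q d²)`, `d` being the distance of `y`
to that endpoint; so the error is at most `d / (exp (q d²) + 1) ≤ max d (1 / (q d))`. -/

open Real

lemma ascList_length {T : ℕ} (a : Fin T → ℝ) : (ascList a).length = T := by
  simp [ascList]

lemma kthSmallest_le_kthLargest {T : ℕ} (a : Fin T → ℝ) {m : ℕ} (hm : 1 ≤ m)
    (hmT : 2 * m ≤ T) : kthSmallest a m ≤ kthLargest a m := by
  have h₁ : m - 1 < (ascList a).length := by rw [ascList_length]; omega
  have h₂ : T - m < (ascList a).length := by rw [ascList_length]; omega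
  rw [kthSmallest, kthLargest, List.getD_eq_getElem _ _ h₁, List.getD_eq_getElem _ _ h₂]
  have hsorted : (ascList a).Pairwise (· ≤ ·) := Multiset.pairwise_sort _ _
  simpa using hsorted.rel_get_of_le (a := ⟨m - 1, h₁⟩) (b := ⟨T - m, h₂⟩)
    (by simp only [Fin.mk_le_mk]; omega)

noncomputable def softClamp (q w v y : ℝ) : ℝ :=
  (exp (q * (max y w - w) ^ 2) * max y w + exp (q * (min y v - v) ^ 2) * min y v)
    / (exp (q * (max y w - w) ^ 2) + exp (q * (min y v - v) ^ 2))

lemma smoothSelector_eq_softClamp {T : ℕ} (m : ℕ) (q : ℝ) (x : Fin T → ℝ) (t : Fin T) :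
    smoothSelector m q x t = softClamp q (kthSmallest x m) (kthLargest x m) (x t) :=
  rfl

lemma softClamp_of_mem_Icc {q w v y : ℝ} (hy : y ∈ Set.Icc w v) : softClamp q w v y = y := by
  rw [softClamp, max_eq_left hy.1, min_eq_left hy.2, ← add_mul, mul_div_cancel_left₀]
  positivity

lemma softClamp_sub_of_lt {q w v y : ℝ} (hvy : v < y) (hwv : w ≤ v) :
    softClamp q w v y - y = -((y - v) / (exp (q * (y - w) ^ 2) + 1)) := by
  rw [softClamp, max_eq_left (by linarith), min_eq_right hvy.le, sub_self, zero_pow two_ne_zero,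
    mul_zero, exp_zero]
  field_simp
  ring

lemma softClamp_sub_of_gt {q w v y : ℝ} (hyw : y < w) (hwv : w ≤ v) :
    softClamp q w v y - y = (w - y) / (exp (q * (y - v) ^ 2) + 1) := by
  rw [softClamp, max_eq_right hyw.le, min_eq_left (by linarith), sub_self, zero_pow two_ne_zero,
    mul_zero, exp_zero]
  field_simp
  ring

lemma div_exp_mul_add_one_le {ε q d c : ℝ} (hε : 0 < ε) (hq : 1 / ε ^ 2 ≤ q) (hd : 0 ≤ d)
    (hc : d ^ 2 ≤ c) : d / (exp (q * c) + 1) ≤ ε := by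
  have hqε : 1 ≤ q * ε ^ 2 := by rwa [div_le_iff₀ (by positivity)] at hq
  have hq₀ : 0 ≤ q := by nlinarith
  rw [div_le_iff₀ (by positivity)]
  have hexp : q * d ^ 2 ≤ exp (q * c) := by
    nlinarith [add_one_le_exp (q * c), mul_le_mul_of_nonneg_left hc hq₀]
  rcases le_or_gt d ε with hdε | hεd
  · nlinarith [exp_pos (q * c)]
  · -- `d ≤ ε q d²` because `ε q d ≥ ε² q ≥ 1`
    nlinarith [mul_le_mul_of_nonneg_left hεd.le (by positivity : 0 ≤ ε * q * d)]

lemma abs_softClamp_sub_le {ε q w v y : ℝ} (hε : 0 < ε) (hq : 1 / ε ^ 2 ≤ q) (hwv : w ≤ v) :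
    |softClamp q w v y - y| ≤ ε := by
  rcases lt_or_ge v y with hvy | hyv
  · rw [softClamp_sub_of_lt hvy hwv, abs_neg, abs_of_nonneg (by positivity)]
    exact div_exp_mul_add_one_le hε hq (by linarith) (by nlinarith)
  rcases lt_or_ge y w with hyw | hwy
  · rw [softClamp_sub_of_gt hyw hwv, abs_of_nonneg (by positivity)]
    exact div_exp_mul_add_one_le hε hq (by linarith) (by nlinarith)
  · rw [softClamp_of_mem_Icc ⟨hwy, hyv⟩, sub_self, abs_zero]
    exact hε.le

theorem smoothSelector_uniform_convergence_general (T : ℕ) (hT : 4 ≤ T) :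
    ∀ ε : ℝ, 0 < ε → ∃ q₀ : ℝ, 0 < q₀ ∧ ∀ q : ℝ, q₀ ≤ q →
      ∀ x : Fin T → ℝ, (∀ t, x t ∈ Set.Icc (0 : ℝ) 1) →
        ∀ t : Fin T, |smoothSelector (T / 4) q x t - x t| ≤ ε := by
  intro ε hε
  refine ⟨1 / ε ^ 2, by positivity, fun q hq x _ t => ?_⟩
  rw [smoothSelector_eq_softClamp]
  exact abs_softClamp_sub_le hε hq (kthSmallest_le_kthLargest x (by omega) (by omega))

/-- with `m = T/4`, the smooth selector `x̂_q(t)` converges to `x t`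
uniformly over `x ∈ [0,1]^T` and `t` as `q → ∞`. -/
theorem smoothSelector_uniform_convergence (T : ℕ) (hT : 4 ≤ T) (hdvd : 4 ∣ T) :
    ∀ ε : ℝ, 0 < ε → ∃ q₀ : ℝ, 0 < q₀ ∧ ∀ q : ℝ, q₀ ≤ q →
      ∀ x : Fin T → ℝ, (∀ t, x t ∈ Set.Icc (0 : ℝ) 1) →
        ∀ t : Fin T, |smoothSelector (T / 4) q x t - x t| ≤ ε :=
  smoothSelector_uniform_convergence_general T hT
end

section
/- Let f : ℝ^d → ℝ be C², let x* ∈ [0,1]^d be the unique global minimizer of f over [0,1]^d, and assume the Hessian of f at x* (the matrix of second partial derivatives) is positive definite. Then there exists R > 0 such that for every r ∈ (0, R) there exist δ > 0, L > 0, and a line segment G ⊆ B(x*, r) ∩ [0,1]^d of length δ such that |f(x) − f(y)| ≥ L ‖x − y‖₂ for all x, y ∈ G, and f(x) > f(x*) for all x ∈ G. Moreover one may take δ = r/4 and L = λ_min r / 8, where λ_min is the smallest eigenvalue of the Hessian of f at x*. -/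
/-!
Take a unit vector `e` with `x* + τ e` in the cube for `τ ∈ [0, 1/2]`, and put
`g τ = f (x* + τ e)`. Minimality of `x*` on the cube gives `g' 0 ≥ 0`, while
`g'' 0 = D²f(x*)(e, e) ≥ λ_min`, hence `g'' ≥ λ_min / 2` on some `[0, ρ)`. So `g' ≥ λ_min r / 8`
on `[r/4, 3r/4]`, and on the segment `x* + [r/2, 3r/4] e` the function `f` increases with slope
at least `λ_min r / 8` and stays above `g (r/4) ≥ f x*`.
-/

open Set Metric

/-- The cube `[0,1]^d` inside `EuclideanSpace ℝ (Fin d)`. -/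
def ecube (d : ℕ) : Set (EuclideanSpace ℝ (Fin d)) := {x | ∀ i, x i ∈ Icc (0 : ℝ) 1}

open Matrix RealInnerProductSpace

theorem Matrix.PosDef.iInf_eigenvalues_pos {n : Type*} [Fintype n] [DecidableEq n] [Nonempty n]
    {A : Matrix n n ℝ} (hA : A.PosDef) : 0 < ⨅ i, hA.1.eigenvalues i :=
  have ⟨j, hj⟩ := Finite.exists_min hA.1.eigenvalues
  (hA.eigenvalues_pos j).trans_le (le_ciInf hj)

theorem Matrix.IsHermitian.iInf_eigenvalues_mul_norm_sq_le {n : Type*} [Fintype n] [DecidableEq n]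
    [Nonempty n] {A : Matrix n n ℝ} (hA : A.IsHermitian) (x : EuclideanSpace ℝ n) :
    (⨅ i, hA.eigenvalues i) * ‖x‖ ^ 2 ≤ x ⬝ᵥ (A *ᵥ x) := by
  set b := hA.eigenvectorBasis
  have hb : ∀ j, ⟪b j, toEuclideanLin A x⟫ = hA.eigenvalues j * ⟪b j, x⟫ := fun j => by
    rw [← isSymmetric_toEuclideanLin_iff.mpr hA, toLpLin_apply, hA.mulVec_eigenvectorBasis]
    exact real_inner_smul_left _ _ _
  calc (⨅ i, hA.eigenvalues i) * ‖x‖ ^ 2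
      = ∑ j, (⨅ i, hA.eigenvalues i) * ⟪b j, x⟫ ^ 2 := by
        rw [← Finset.mul_sum, ← real_inner_self_eq_norm_sq, ← b.sum_inner_mul_inner x x]
        simp_rw [real_inner_comm x, sq]
    _ ≤ ∑ j, hA.eigenvalues j * ⟪b j, x⟫ ^ 2 := by
        gcongr with j
        exact ciInf_le (finite_range _).bddBelow j
    _ = ⟪x, toEuclideanLin A x⟫ := by
        rw [← b.sum_inner_mul_inner]
        congr! 1 with j
        rw [hb, real_inner_comm x]
        ring
    _ = x ⬝ᵥ (A *ᵥ x) := by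
        rw [EuclideanSpace.inner_eq_star_dotProduct, dotProduct_comm]
        rfl

theorem ContinuousLinearMap.apply_apply_eq_dotProduct_mulVec {ι : Type*} [Fintype ι]
    [DecidableEq ι] (B : EuclideanSpace ℝ ι →L[ℝ] EuclideanSpace ℝ ι →L[ℝ] ℝ)
    (H : Matrix ι ι ℝ)
    (hH : ∀ i j, H i j = B (EuclideanSpace.single i 1) (EuclideanSpace.single j 1))
    (v w : EuclideanSpace ℝ ι) : B v w = v ⬝ᵥ (H *ᵥ w) := by
  set b := (EuclideanSpace.basisFun ι ℝ).toBasis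
  have hHb : H = LinearMap.toMatrix₂ b b B.toLinearMap₁₂ := by
    ext i j
    simp [hH, b]
  rw [← B.toLinearMap₁₂_apply_apply_apply, ← Matrix.toLinearMap₂_toMatrix₂ b b B.toLinearMap₁₂,
    ← hHb, Matrix.toLinearMap₂_apply]
  simp [b, dotProduct, mulVec, Finset.mul_sum, mul_comm (w.ofLp _)]

theorem Matrix.IsHermitian.iInf_eigenvalues_mul_norm_sq_le_fderiv_fderiv {ι : Type*} [Fintype ι]
    [DecidableEq ι] [Nonempty ι] {f : EuclideanSpace ℝ ι → ℝ} {x : EuclideanSpace ℝ ι}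
    {H : Matrix ι ι ℝ} (hH : ∀ i j, H i j = iteratedFDeriv ℝ 2 f x
      ![EuclideanSpace.single i 1, EuclideanSpace.single j 1])
    (hHerm : H.IsHermitian) (v : EuclideanSpace ℝ ι) :
    (⨅ i, hHerm.eigenvalues i) * ‖v‖ ^ 2 ≤ fderiv ℝ (fderiv ℝ f) x v v := by
  rw [ContinuousLinearMap.apply_apply_eq_dotProduct_mulVec _ H
    (fun i j => by simp [hH, iteratedFDeriv_two_apply])]
  exact hHerm.iInf_eigenvalues_mul_norm_sq_le v

-- Each coordinate moves towards `1/2`, by at most `1/(2√d) ≤ 1/2`.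
theorem exists_norm_eq_one_forall_add_smul_mem_ecube {d : ℕ} (hd : 1 ≤ d)
    {x : EuclideanSpace ℝ (Fin d)} (hx : x ∈ ecube d) :
    ∃ e, ‖e‖ = 1 ∧ ∀ τ ∈ Icc (0 : ℝ) (1 / 2), x + τ • e ∈ ecube d := by
  set s : Fin d → ℝ := fun i => if x i ≤ 1 / 2 then 1 else -1
  have hs : ∀ i, s i ^ 2 = 1 := fun i => by unfold s; split_ifs <;> norm_num
  have hsqrt : 1 ≤ √(d : ℝ) := Real.one_le_sqrt.mpr (by exact_mod_cast hd)
  have hsqrt₀ : 0 < √(d : ℝ) := zero_lt_one.trans_le hsqrt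
  refine ⟨(√(d : ℝ))⁻¹ • WithLp.toLp 2 s, ?_, fun τ hτ i => ?_⟩
  · rw [norm_smul, EuclideanSpace.norm_eq]
    simp [hs, abs_of_pos hsqrt₀, hsqrt₀.ne']
  · obtain ⟨hx₀, hx₁⟩ := hx i
    have h₀ : 0 < (√(d : ℝ))⁻¹ := inv_pos.mpr hsqrt₀
    have h₁ : (√(d : ℝ))⁻¹ ≤ 1 := inv_le_one_of_one_le₀ hsqrt
    simp only [PiLp.add_apply, PiLp.smul_apply, smul_eq_mul, s]
    split_ifs <;> constructor <;> nlinarith [hτ.1, hτ.2]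

theorem mul_sub_le_sub_of_hasDerivAt_of_le {g g' : ℝ → ℝ} {a b c s t : ℝ}
    (hg : ∀ τ, HasDerivAt g (g' τ) τ) (hc : ∀ τ ∈ Ioo b a, c ≤ g' τ)
    (hbs : b ≤ s) (hst : s ≤ t) (hta : t ≤ a) : c * (t - s) ≤ g t - g s :=
  (convex_Icc b a).mul_sub_le_image_sub_of_le_deriv
    (fun τ _ => (hg τ).continuousAt.continuousWithinAt)
    (fun τ _ => (hg τ).differentiableAt.differentiableWithinAt)
    (fun τ hτ => by rw [(hg τ).deriv]; exact hc τ (by rwa [interior_Icc] at hτ))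
    s ⟨hbs, hst.trans hta⟩ t ⟨hbs.trans hst, hta⟩ hst

theorem mul_sub_le_sub_of_le_second_deriv {g g' g'' : ℝ → ℝ} {a b c s t : ℝ}
    (hg : ∀ τ, HasDerivAt g (g' τ) τ) (hg' : ∀ τ, HasDerivAt g' (g'' τ) τ)
    (h₀ : 0 ≤ g' 0) (hc : 0 ≤ c) (hg'' : ∀ τ ∈ Ioo 0 a, c ≤ g'' τ)
    (hb : 0 ≤ b) (hbs : b ≤ s) (hst : s ≤ t) (hta : t ≤ a) : c * b * (t - s) ≤ g t - g s := by
  refine mul_sub_le_sub_of_hasDerivAt_of_le hg (fun τ hτ => ?_) hbs hst hta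
  have := mul_sub_le_sub_of_hasDerivAt_of_le hg' hg'' le_rfl (hb.trans hτ.1.le) hτ.2.le
  nlinarith [hτ.1]

theorem mul_abs_sub_le_abs_sub_of_forall_le {g : ℝ → ℝ} {k : ℝ} {S : Set ℝ}
    (h : ∀ s ∈ S, ∀ t ∈ S, s ≤ t → k * (t - s) ≤ g t - g s) {s t : ℝ} (hs : s ∈ S) (ht : t ∈ S) :
    k * |t - s| ≤ |g t - g s| := by
  rcases le_total s t with hst | hts
  · rw [abs_of_nonneg (sub_nonneg.mpr hst)]
    exact (h s hs t ht hst).trans (le_abs_self _)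
  · rw [abs_sub_comm, abs_of_nonneg (sub_nonneg.mpr hts), abs_sub_comm]
    exact (h t ht s hs hts).trans (le_abs_self _)

section Line

variable {E F : Type*} [NormedAddCommGroup E] [NormedSpace ℝ E] [NormedAddCommGroup F]
  [NormedSpace ℝ F]

theorem segment_add_smul (x v : E) (s t : ℝ) :
    segment ℝ (x + s • v) (x + t • v) = (fun τ : ℝ => x + τ • v) '' segment ℝ s t := by
  have hL : (fun τ : ℝ => x + τ • v) = AffineMap.lineMap x (x + v) := by
    ext1 τ
    rw [AffineMap.lineMap_apply_module', add_sub_cancel_left, add_comm]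
  rw [hL, image_segment, ← hL]

theorem dist_add_smul_add_smul (x v : E) (s t : ℝ) :
    dist (x + s • v) (x + t • v) = |s - t| * ‖v‖ := by
  rw [dist_add_left, dist_eq_norm, ← sub_smul, norm_smul, Real.norm_eq_abs]

theorem hasDerivAt_comp_add_smul {φ : E → F} {x v : E} {t : ℝ}
    (h : DifferentiableAt ℝ φ (x + t • v)) :
    HasDerivAt (fun s : ℝ => φ (x + s • v)) (fderiv ℝ φ (x + t • v) v) t := by
  have := h.hasFDerivAt.comp_hasDerivAt t (((hasDerivAt_id t).smul_const v).const_add x)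
  rwa [one_smul] at this

theorem IsMinOn.fderiv_apply_nonneg_of_forall_add_smul_mem {f : E → ℝ} {s : Set E} {x v : E}
    {ε : ℝ} (hmin : IsMinOn f s x) (hf : DifferentiableAt ℝ f x) (hε : 0 < ε)
    (hs : ∀ τ ∈ Icc 0 ε, x + τ • v ∈ s) : 0 ≤ fderiv ℝ f x v := by
  have hseg : segment ℝ x (x + ε • v) ⊆ s := by
    have hL := segment_add_smul x v 0 ε
    rw [zero_smul, add_zero] at hL
    rw [hL, segment_eq_Icc hε.le, image_subset_iff]
    exact hs
  have := hmin.localize.hasFDerivWithinAt_nonneg hf.hasFDerivAt.hasFDerivWithinAt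
    (mem_posTangentConeAt_of_segment_subset hseg)
  rwa [map_smul, smul_eq_mul, mul_nonneg_iff_of_pos_left hε] at this

variable {f : E → ℝ} (hf : ContDiff ℝ 2 f)
include hf

theorem ContDiff.exists_pos_forall_lt_fderiv_fderiv_add_smul {x v : E} {c : ℝ}
    (hc : c < fderiv ℝ (fderiv ℝ f) x v v) :
    ∃ ρ > (0 : ℝ), ∀ τ ∈ Ioo 0 ρ, c < fderiv ℝ (fderiv ℝ f) (x + τ • v) v v := by
  have hD2 : Continuous (fderiv ℝ (fderiv ℝ f)) :=
    (hf.fderiv_right (m := 1) (by norm_num)).continuous_fderiv (by norm_num)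
  obtain ⟨ρ, hρ, hρc⟩ := Metric.eventually_nhds_iff.mp <|
    ((show Continuous fun τ : ℝ => fderiv ℝ (fderiv ℝ f) (x + τ • v) v v by fun_prop).tendsto
      0).eventually_const_lt (by simpa using hc)
  exact ⟨ρ, hρ, fun τ hτ => hρc (by simpa [abs_of_pos hτ.1] using hτ.2)⟩

theorem ContDiff.mul_sub_le_sub_comp_add_smul {x v : E} {a b c s t : ℝ}
    (h₀ : 0 ≤ fderiv ℝ f x v) (hc : 0 ≤ c)
    (hD2 : ∀ τ ∈ Ioo 0 a, c ≤ fderiv ℝ (fderiv ℝ f) (x + τ • v) v v)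
    (hb : 0 ≤ b) (hbs : b ≤ s) (hst : s ≤ t) (hta : t ≤ a) :
    c * b * (t - s) ≤ f (x + t • v) - f (x + s • v) := by
  have hdf : Differentiable ℝ f := hf.differentiable (by norm_num)
  have hdf' : Differentiable ℝ (fderiv ℝ f) :=
    (hf.fderiv_right (m := 1) (by norm_num)).differentiable (by norm_num)
  refine mul_sub_le_sub_of_le_second_deriv (fun τ => hasDerivAt_comp_add_smul (hdf _))
    (fun τ => ?_) (by simpa using h₀) hc hD2 hb hbs hst hta
  simpa using (hasDerivAt_comp_add_smul (hdf' _)).clm_apply (hasDerivAt_const τ v)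

theorem exists_segment_near_isMinOn {s : Set E} {x e : E} {ε m : ℝ}
    (hmin : IsMinOn f s x) (hε : 0 < ε) (hs : ∀ τ ∈ Icc 0 ε, x + τ • e ∈ s) (he : ‖e‖ = 1)
    (hm : 0 < m) (hD2 : m ≤ fderiv ℝ (fderiv ℝ f) x e e) :
    ∃ R > (0 : ℝ), ∀ r : ℝ, 0 < r → r < R →
      ∃ u v : E, segment ℝ u v ⊆ ball x r ∩ s ∧ dist u v = r / 4 ∧
        (∀ y ∈ segment ℝ u v, ∀ z ∈ segment ℝ u v, m * r / 8 * ‖y - z‖ ≤ |f y - f z|) ∧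
        (∀ y ∈ segment ℝ u v, f x < f y) := by
  obtain ⟨ρ, hρ, hρD2⟩ := hf.exists_pos_forall_lt_fderiv_fderiv_add_smul
    ((half_lt_self hm).trans_le hD2)
  have hgrad := hmin.fderiv_apply_nonneg_of_forall_add_smul_mem
    (hf.differentiable (by norm_num) x) hε hs
  refine ⟨min ρ ε, by positivity, fun r hr hrR => ⟨x + (r / 2) • e, x + (3 * r / 4) • e, ?_⟩⟩
  obtain ⟨hrρ, hrε⟩ := lt_min_iff.mp hrR
  have hinc : ∀ s t, r / 4 ≤ s → s ≤ t → t ≤ ρ →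
      m / 2 * (r / 4) * (t - s) ≤ f (x + t • e) - f (x + s • e) := fun s t =>
    hf.mul_sub_le_sub_comp_add_smul hgrad (by positivity) (fun τ hτ => (hρD2 τ hτ).le)
      (by positivity)
  rw [segment_add_smul, segment_eq_Icc (by linarith)]
  refine ⟨?_, ?_, ?_, ?_⟩
  · rintro _ ⟨τ, hτ, rfl⟩
    refine ⟨?_, hs τ ⟨by linarith [hτ.1], by linarith [hτ.2]⟩⟩
    beta_reduce
    rw [mem_ball, dist_self_add_left, norm_smul, he, mul_one, Real.norm_eq_abs,
      abs_of_pos (by linarith [hτ.1])]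
    linarith [hτ.2]
  · rw [dist_add_smul_add_smul, he, mul_one, abs_sub_comm, abs_of_nonneg (by linarith)]
    ring
  · rintro _ ⟨s, hs, rfl⟩ _ ⟨t, ht, rfl⟩
    rw [← dist_eq_norm, dist_add_smul_add_smul, he, mul_one]
    refine mul_abs_sub_le_abs_sub_of_forall_le (g := fun τ => f (x + τ • e))
      (fun s hs t ht hst => ?_) ht hs
    linarith [hinc s t (by linarith [hs.1]) hst (by linarith [ht.2])]
  · rintro _ ⟨t, ht, rfl⟩
    have hgrow := hinc (r / 4) t le_rfl (by linarith [ht.1]) (by linarith [ht.2])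
    have hmin' : f x ≤ f (x + (r / 4) • e) := hmin (hs (r / 4) ⟨by positivity, by linarith⟩)
    have hpos : 0 < m / 2 * (r / 4) * (t - r / 4) := mul_pos (by positivity) (by linarith [ht.1])
    show f x < f (x + t • e)
    linarith

end Line

theorem segment_near_nondegenerate_minimizer_general (d : ℕ) (hd : 1 ≤ d)
    (f : EuclideanSpace ℝ (Fin d) → ℝ) (hf : ContDiff ℝ 2 f)
    (xstar : EuclideanSpace ℝ (Fin d)) (hxK : xstar ∈ ecube d)
    (hmin : ∀ x ∈ ecube d, f xstar ≤ f x)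
    (H : Matrix (Fin d) (Fin d) ℝ)
    (hH : ∀ i j, H i j = iteratedFDeriv ℝ 2 f xstar
      ![EuclideanSpace.single i 1, EuclideanSpace.single j 1])
    (hPD : H.PosDef) :
    ∃ R > (0 : ℝ), ∀ r : ℝ, 0 < r → r < R →
      ∃ u v : EuclideanSpace ℝ (Fin d),
        segment ℝ u v ⊆ ball xstar r ∩ ecube d ∧
        dist u v = r / 4 ∧
        (∀ x ∈ segment ℝ u v, ∀ y ∈ segment ℝ u v,
          ((⨅ i, hPD.1.eigenvalues i) * r / 8) * ‖x - y‖ ≤ |f x - f y|) ∧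
        (∀ x ∈ segment ℝ u v, f xstar < f x) := by
  have : Nonempty (Fin d) := Fin.pos_iff_nonempty.mp hd
  obtain ⟨e, he, hcube⟩ := exists_norm_eq_one_forall_add_smul_mem_ecube hd hxK
  have hHess := hPD.1.iInf_eigenvalues_mul_norm_sq_le_fderiv_fderiv hH e
  rw [he, one_pow, mul_one] at hHess
  exact exists_segment_near_isMinOn hf (isMinOn_iff.mpr hmin) (by norm_num) hcube he
    hPD.iInf_eigenvalues_pos hHess

/-- near the unique global minimizer `x*` of a `C²` function `f` on
`[0,1]^d` with positive definite Hessian, for every small enough radius `r` there is a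
line segment `G ⊆ B(x*, r) ∩ [0,1]^d` of length `r/4` on which
`|f x − f y| ≥ (λ_min r / 8) ‖x − y‖₂` and `f > f(x*)`. -/
theorem segment_near_nondegenerate_minimizer (d : ℕ) (hd : 1 ≤ d)
    (f : EuclideanSpace ℝ (Fin d) → ℝ) (hf : ContDiff ℝ 2 f)
    (xstar : EuclideanSpace ℝ (Fin d)) (hxK : xstar ∈ ecube d)
    (hmin : ∀ x ∈ ecube d, f xstar ≤ f x)
    (huniq : ∀ x ∈ ecube d, f x = f xstar → x = xstar)
    (H : Matrix (Fin d) (Fin d) ℝ)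
    (hH : ∀ i j, H i j = iteratedFDeriv ℝ 2 f xstar
      ![EuclideanSpace.single i 1, EuclideanSpace.single j 1])
    (hPD : H.PosDef) :
    ∃ R > (0 : ℝ), ∀ r : ℝ, 0 < r → r < R →
      ∃ u v : EuclideanSpace ℝ (Fin d),
        segment ℝ u v ⊆ ball xstar r ∩ ecube d ∧
        dist u v = r / 4 ∧
        (∀ x ∈ segment ℝ u v, ∀ y ∈ segment ℝ u v,
          ((⨅ i, hPD.1.eigenvalues i) * r / 8) * ‖x - y‖ ≤ |f x - f y|) ∧
        (∀ x ∈ segment ℝ u v, f xstar < f x) :=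
  segment_near_nondegenerate_minimizer_general d hd f hf xstar hxK hmin H hH hPD
end

section
/- Let T ≥ 1 and ε ∈ (0,1]. Then there exist widths p₁, p₂ ≤ 2T⌈1/ε⌉, matrices W₁ ∈ ℝ^{p₁×T} and W₂ ∈ ℝ^{p₂×p₁}, vectors b₁ ∈ ℝ^{p₁}, b₂ ∈ ℝ^{p₂}, w₃ ∈ ℝ^{p₂}, and b₃ ∈ ℝ such that the three-layer ReLU network f̂(x) = w₃ᵀ ReLU(W₂ ReLU(W₁ x + b₁) + b₂) + b₃ satisfies |f̂(x) − max_{1≤t≤T} x_t| ≤ ε for all x ∈ [0,1]^T. -/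
/-!
Put `m = ⌈1/ε⌉` and `M = maxₜ xₜ`. The first layer computes the `T·m` ramps `ReLU(m xₜ - j)`,
`j < m`; the second layer computes `ReLU(1 - Sⱼ)` with `Sⱼ = ∑ₜ ReLU(m xₜ - j)`, so the output
`1 - (1/m) ∑ⱼ ReLU(1 - Sⱼ)` equals `(1/m) ∑ⱼ min(1, Sⱼ)`. Since `Sⱼ` vanishes when `m M ≤ j` and
is at least `m M - j`, the sum `∑ⱼ min(1, Sⱼ)` lies between the staircases
`∑ⱼ min(1, ReLU(m M - j)) = m M` and `∑ⱼ min(1, ReLU(m M + 1 - j)) ≤ m M + 1`.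
-/

open Matrix Finset

def ramp (z : ℝ) : ℝ := min 1 (max z 0)

lemma ramp_nonneg (z : ℝ) : 0 ≤ ramp z := le_min zero_le_one (le_max_right _ _)

lemma ramp_le_one (z : ℝ) : ramp z ≤ 1 := min_le_left _ _

lemma ramp_mono : Monotone ramp := fun _ _ h => min_le_min le_rfl (max_le_max h le_rfl)

lemma ramp_of_nonpos {z : ℝ} (hz : z ≤ 0) : ramp z = 0 := by
  simp [ramp, max_eq_right hz]

lemma ramp_of_one_le {z : ℝ} (hz : 1 ≤ z) : ramp z = 1 :=
  min_eq_left (le_max_of_le_left hz)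

lemma ramp_of_nonneg {z : ℝ} (hz : 0 ≤ z) : ramp z = min 1 z := by
  rw [ramp, max_eq_left hz]

lemma max_one_sub_zero_eq_one_sub_ramp {z : ℝ} (hz : 0 ≤ z) : max (1 - z) 0 = 1 - ramp z := by
  rw [ramp_of_nonneg hz]
  rcases le_total 1 z with h | h
  · rw [min_eq_left h, max_eq_right (by linarith), sub_self]
  · rw [min_eq_right h, max_eq_left (by linarith)]

lemma min_add_ramp_sub (a b : ℝ) : min a b + ramp (a - b) = min a (b + 1) := by
  rcases le_total a b with h | h
  · rw [min_eq_left h, ramp_of_nonpos (by linarith), min_eq_left (by linarith), add_zero]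
  · rcases le_total a (b + 1) with h' | h'
    · rw [min_eq_right h, ramp_of_nonneg (by linarith), min_eq_right (by linarith),
        min_eq_left h']
      ring
    · rw [min_eq_right h, ramp_of_one_le (by linarith), min_eq_right h']

lemma sum_range_ramp_sub {a : ℝ} (ha : 0 ≤ a) (n : ℕ) :
    ∑ j ∈ range n, ramp (a - j) = min a n := by
  induction n with
  | zero => simp [ha]
  | succ n ih => rw [sum_range_succ, ih, min_add_ramp_sub]; push_cast; rfl

section SumRelu

variable {ι : Type*} [Fintype ι]

lemma ramp_sub_le_ramp_sum_relu_sub (y : ι → ℝ) (i : ι) (c : ℝ) :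
    ramp (y i - c) ≤ ramp (∑ k, max (y k - c) 0) :=
  ramp_mono <| (le_max_left _ _).trans <|
    single_le_sum (f := fun k => max (y k - c) 0) (fun _ _ => le_max_right _ _) (mem_univ i)

lemma ramp_sum_relu_sub_le {y : ι → ℝ} {a : ℝ} (hy : ∀ k, y k ≤ a) (c : ℝ) :
    ramp (∑ k, max (y k - c) 0) ≤ ramp (a + 1 - c) := by
  rcases le_or_gt a c with h | h
  · have hsum : ∑ k, max (y k - c) 0 = 0 :=
      sum_eq_zero fun k _ => max_eq_right (by linarith [hy k])
    rw [hsum, ramp_of_nonpos le_rfl]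
    exact ramp_nonneg _
  · rw [ramp_of_one_le (z := a + 1 - c) (by linarith)]
    exact ramp_le_one _

lemma min_le_sum_ramp_sum_relu_sub (y : ι → ℝ) (i : ι) (hi : 0 ≤ y i) (n : ℕ) :
    min (y i) n ≤ ∑ j ∈ range n, ramp (∑ k, max (y k - j) 0) := by
  rw [← sum_range_ramp_sub hi]
  exact sum_le_sum fun j _ => ramp_sub_le_ramp_sum_relu_sub y i j

lemma sum_ramp_sum_relu_sub_le {y : ι → ℝ} {a : ℝ} (hy : ∀ k, y k ≤ a) (ha : 0 ≤ a) (n : ℕ) :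
    ∑ j ∈ range n, ramp (∑ k, max (y k - j) 0) ≤ a + 1 := by
  calc ∑ j ∈ range n, ramp (∑ k, max (y k - j) 0)
      ≤ ∑ j ∈ range n, ramp (a + 1 - j) := sum_le_sum fun j _ => ramp_sum_relu_sub_le hy j
    _ = min (a + 1) n := sum_range_ramp_sub (by linarith) n
    _ ≤ a + 1 := min_le_left _ _

lemma abs_mul_sum_ramp_sum_relu_sub_le (x : ι → ℝ) (i₀ : ι) (hx : ∀ i, x i ≤ x i₀)
    (h0 : 0 ≤ x i₀) (h1 : x i₀ ≤ 1) {m : ℕ} (hm : 0 < m) :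
    |1 / m * ∑ j ∈ range m, ramp (∑ i, max (m * x i - j) 0) - x i₀| ≤ 1 / m := by
  have hm' : (0 : ℝ) < m := by exact_mod_cast hm
  have hlow := min_le_sum_ramp_sum_relu_sub (fun i => m * x i) i₀ (by positivity) m
  have hhigh := sum_ramp_sum_relu_sub_le (y := fun i => m * x i)
    (fun i => mul_le_mul_of_nonneg_left (hx i) hm'.le) (by positivity) m
  rw [min_eq_left (by nlinarith)] at hlow
  rw [abs_sub_le_iff]
  constructor
  · calc 1 / m * _ - x i₀ ≤ 1 / m * (m * x i₀ + 1) - x i₀ := by gcongr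
      _ = 1 / m := by field_simp; ring
  · calc x i₀ - 1 / m * _ ≤ x i₀ - 1 / m * (m * x i₀) := by gcongr
      _ = 0 := by field_simp; ring
      _ ≤ 1 / m := by positivity

end SumRelu

section MaxNetwork

variable (T m : ℕ)

/-- Hidden unit `finProdFinEquiv (t, j)` of the first layer computes `ReLU(m xₜ - j)`. -/
def maxNetW₁ : Matrix (Fin (T * m)) (Fin T) ℝ :=
  fun r t => if t = (finProdFinEquiv.symm r).1 then (m : ℝ) else 0

def maxNetB₁ : Fin (T * m) → ℝ := fun r => -((finProdFinEquiv.symm r).2 : ℝ)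

def maxNetW₂ : Matrix (Fin m) (Fin (T * m)) ℝ :=
  fun j r => if (finProdFinEquiv.symm r).2 = j then -1 else 0

variable {T m}

lemma maxNet_firstLayer_apply (x : Fin T → ℝ) (t : Fin T) (j : Fin m) :
    (maxNetW₁ T m *ᵥ x + maxNetB₁ T m) (finProdFinEquiv (t, j)) = m * x t - j := by
  simp [maxNetW₁, maxNetB₁, mulVec, dotProduct, ite_mul, sub_eq_add_neg]

lemma maxNetW₂_mulVec_apply (h : Fin (T * m) → ℝ) (j : Fin m) :
    (maxNetW₂ T m *ᵥ h) j = -∑ t, h (finProdFinEquiv (t, j)) := by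
  simp only [mulVec, dotProduct, maxNetW₂]
  rw [← finProdFinEquiv.sum_comp, Fintype.sum_prod_type]
  simp [ite_mul, ← sum_neg_distrib]

lemma maxNet_eval (hm : m ≠ 0) (x : Fin T → ℝ) :
    (fun _ => -(1 / (m : ℝ))) ⬝ᵥ (fun r => max ((maxNetW₂ T m *ᵥ
        (fun s => max ((maxNetW₁ T m *ᵥ x + maxNetB₁ T m) s) 0)
          + (fun _ : Fin m => (1 : ℝ))) r) 0) + 1
      = 1 / m * ∑ j : Fin m, ramp (∑ t, max (m * x t - j) 0) := by
  have hunit : ∀ j : Fin m, max ((maxNetW₂ T m *ᵥ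
      (fun s => max ((maxNetW₁ T m *ᵥ x + maxNetB₁ T m) s) 0) + (fun _ : Fin m => (1 : ℝ))) j) 0
        = 1 - ramp (∑ t, max (m * x t - j) 0) := by
    intro j
    rw [Pi.add_apply, maxNetW₂_mulVec_apply]
    simp only [maxNet_firstLayer_apply]
    rw [← sub_eq_neg_add, max_one_sub_zero_eq_one_sub_ramp
      (sum_nonneg fun _ _ => le_max_right _ _)]
  simp only [dotProduct, hunit, ← mul_sum, sum_sub_distrib, sum_const, card_univ,
    Fintype.card_fin, nsmul_eq_mul, mul_one]
  field_simp
  ring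

end MaxNetwork

/-- for any `T ≥ 1` and `ε ∈ (0,1]` there is a three-layer ReLU network
with hidden widths at most `2T⌈1/ε⌉` that uniformly `ε`-approximates
`x ↦ max_{1≤t≤T} x_t` on `[0,1]^T`. -/
theorem relu_three_layer_max_approx (T : ℕ) (hT : 1 ≤ T) (ε : ℝ) (hε : ε ∈ Set.Ioc (0 : ℝ) 1) :
    ∃ (p₁ p₂ : ℕ), p₁ ≤ 2 * T * ⌈1 / ε⌉₊ ∧ p₂ ≤ 2 * T * ⌈1 / ε⌉₊ ∧
      ∃ (W₁ : Matrix (Fin p₁) (Fin T) ℝ) (b₁ : Fin p₁ → ℝ)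
        (W₂ : Matrix (Fin p₂) (Fin p₁) ℝ) (b₂ : Fin p₂ → ℝ)
        (w₃ : Fin p₂ → ℝ) (b₃ : ℝ),
        ∀ x : Fin T → ℝ, (∀ t, x t ∈ Set.Icc (0 : ℝ) 1) →
          |(w₃ ⬝ᵥ (fun r =>
              max ((W₂.mulVec (fun s => max ((W₁.mulVec x + b₁) s) 0) + b₂) r) 0) + b₃)
            - Finset.univ.sup' ⟨⟨0, hT⟩, Finset.mem_univ _⟩ x| ≤ ε := by
  set m := ⌈1 / ε⌉₊
  have hm : 0 < m := Nat.ceil_pos.mpr (by simpa using hε.1)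
  refine ⟨T * m, m, by nlinarith, by nlinarith, maxNetW₁ T m, maxNetB₁ T m, maxNetW₂ T m,
    fun _ => 1, fun _ => -(1 / m), 1, fun x hx => ?_⟩
  obtain ⟨t₀, -, hM⟩ := exists_mem_eq_sup' ⟨⟨0, hT⟩, mem_univ _⟩ x
  rw [maxNet_eval hm.ne', Fin.sum_univ_eq_sum_range
    (fun j : ℕ => ramp (∑ t, max (m * x t - j) 0)), hM]
  refine (abs_mul_sum_ramp_sum_relu_sub_le x t₀ (fun t => hM ▸ le_sup' x (mem_univ t))
    (hx t₀).1 (hx t₀).2 hm).trans ?_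
  rw [div_le_iff₀ (by positivity), ← div_le_iff₀' hε.1]
  exact Nat.le_ceil _
end

section
/- Let n ≥ 1 and T ≥ 1. For x ∈ [0,1]^T and j = 0, 1, …, n−1 define S_j(x) = Σ_{t=1}^T ReLU(x_t − j/n), and define f̂(x) = Σ_{j=0}^{n−1} [ReLU(S_j(x)) − ReLU(S_j(x) − 1/n)]. Then for every x ∈ [0,1]^T, |f̂(x) − max_{1≤t≤T} x_t| ≤ 1/n. -/
open scoped BigOperators

private lemma clamp_aux (s c : ℝ) (hc : 0 ≤ c) :
    max s 0 - max (s - c) 0 = min (max s 0) c := by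
  rcases le_total s 0 with h | h
  · rw [max_eq_right h, max_eq_right (by linarith), min_eq_left hc]; ring
  · rcases le_total s c with h2 | h2
    · rw [max_eq_left h, max_eq_right (by linarith), min_eq_left h2]; ring
    · rw [max_eq_left h, max_eq_left (by linarith), min_eq_right h2]; ring

private lemma key_lb (a s c : ℝ) (hc : 0 ≤ c) (hs : max a 0 ≤ s) :
    max a 0 - max (a - c) 0 ≤ max s 0 - max (s - c) 0 := by
  have hs0 : (0:ℝ) ≤ s := le_trans (le_max_right a 0) hs
  rw [clamp_aux a c hc, clamp_aux s c hc, max_eq_left hs0]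
  exact min_le_min hs le_rfl

private lemma key_ub (a s c : ℝ) (hc : 0 ≤ c) (hs0 : 0 ≤ s) (h : a ≤ 0 → s ≤ 0) :
    max s 0 - max (s - c) 0 ≤ max (a + c) 0 - max a 0 := by
  rw [clamp_aux s c hc, max_eq_left hs0]
  rcases le_total a 0 with ha | ha
  · have hs : s = 0 := le_antisymm (h ha) hs0
    have h1 : max a 0 ≤ max (a + c) 0 := max_le_max (by linarith) le_rfl
    rw [hs, min_eq_left hc]
    linarith
  · rw [max_eq_left ha, max_eq_left (by linarith : (0:ℝ) ≤ a + c)]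
    have := min_le_right s c
    linarith

/-- the explicit two-hidden-layer ReLU expression
`f̂(x) = Σ_{j=0}^{n−1} [ReLU(S_j(x)) − ReLU(S_j(x) − 1/n)]`, with
`S_j(x) = Σ_t ReLU(x_t − j/n)`, approximates `max_t x_t` within `1/n` on `[0,1]^T`. -/
theorem relu_grid_sum_approx_max (n T : ℕ) (hn : 1 ≤ n) (hT : 1 ≤ T)
    (x : Fin T → ℝ) (hx : ∀ t, x t ∈ Set.Icc (0 : ℝ) 1) :
    |(∑ j ∈ Finset.range n,
        (max (∑ t : Fin T, max (x t - (j : ℝ) / n) 0) 0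
          - max ((∑ t : Fin T, max (x t - (j : ℝ) / n) 0) - 1 / n) 0))
      - Finset.univ.sup' ⟨⟨0, hT⟩, Finset.mem_univ _⟩ x| ≤ 1 / n := by
  set M := Finset.univ.sup' ⟨⟨0, hT⟩, Finset.mem_univ _⟩ x with hMdef
  obtain ⟨t0, -, ht0⟩ := Finset.exists_mem_eq_sup' (⟨⟨0, hT⟩, Finset.mem_univ _⟩ :
    (Finset.univ : Finset (Fin T)).Nonempty) x
  have hMx : M = x t0 := ht0
  have hle : ∀ t, x t ≤ M := fun t => Finset.le_sup' x (Finset.mem_univ t)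
  have hM0 : (0:ℝ) ≤ M := by rw [hMx]; exact (hx t0).1
  have hM1 : M ≤ 1 := Finset.sup'_le _ _ fun t _ => (hx t).2
  have hnR : (0:ℝ) < n := by exact_mod_cast hn
  have hcn : (0:ℝ) ≤ 1 / n := by positivity
  set S : ℕ → ℝ := fun j => ∑ t : Fin T, max (x t - (j : ℝ) / n) 0 with hS
  have hS0 : ∀ j, (0:ℝ) ≤ S j := fun j =>
    Finset.sum_nonneg fun t _ => le_max_right _ _
  have hSsingle : ∀ j : ℕ, max (M - (j:ℝ)/n) 0 ≤ S j := by
    intro j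
    rw [hMx]
    exact Finset.single_le_sum (f := fun t => max (x t - (j:ℝ)/n) 0)
      (fun t _ => le_max_right _ _) (Finset.mem_univ t0)
  have hSzero : ∀ j : ℕ, M - (j:ℝ)/n ≤ 0 → S j ≤ 0 := by
    intro j hj
    exact Finset.sum_nonpos fun t _ => max_le (by linarith [hle t]) le_rfl
  -- lower bound : M ≤ sum
  have lower : M ≤ ∑ j ∈ Finset.range n, (max (S j) 0 - max (S j - 1/n) 0) := by
    have tele : ∑ j ∈ Finset.range n,
        (max (M - (j:ℝ)/n) 0 - max (M - ((j+1:ℕ):ℝ)/n) 0)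
        = max (M - ((0:ℕ):ℝ)/n) 0 - max (M - ((n:ℕ):ℝ)/n) 0 :=
      Finset.sum_range_sub' (fun j : ℕ => max (M - (j:ℝ)/n) 0) n
    have e0 : max (M - ((0:ℕ):ℝ)/n) 0 = M := by
      rw [max_eq_left (by rw [Nat.cast_zero, zero_div]; linarith)]
      rw [Nat.cast_zero, zero_div]; ring
    have en : max (M - ((n:ℕ):ℝ)/n) 0 = 0 := by
      rw [max_eq_right]
      rw [div_self (ne_of_gt hnR)]; linarith
    calc M = ∑ j ∈ Finset.range n,
          (max (M - (j:ℝ)/n) 0 - max (M - ((j+1:ℕ):ℝ)/n) 0) := by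
            rw [tele, e0, en]; ring
      _ ≤ _ := by
          apply Finset.sum_le_sum
          intro j _
          have e : M - ((j+1:ℕ):ℝ)/n = (M - (j:ℝ)/n) - 1/n := by push_cast; ring
          rw [e]
          exact key_lb (M - (j:ℝ)/n) (S j) (1/n) hcn (hSsingle j)
  -- upper bound : sum ≤ M + 1/n
  have upper : (∑ j ∈ Finset.range n, (max (S j) 0 - max (S j - 1/n) 0)) ≤ M + 1/n := by
    have tele : ∑ j ∈ Finset.range n,
        (max (M - (j:ℝ)/n + 1/n) 0 - max (M - ((j+1:ℕ):ℝ)/n + 1/n) 0)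
        = max (M - ((0:ℕ):ℝ)/n + 1/n) 0 - max (M - ((n:ℕ):ℝ)/n + 1/n) 0 :=
      Finset.sum_range_sub' (fun j : ℕ => max (M - (j:ℝ)/n + 1/n) 0) n
    calc (∑ j ∈ Finset.range n, (max (S j) 0 - max (S j - 1/n) 0))
        ≤ ∑ j ∈ Finset.range n,
            (max (M - (j:ℝ)/n + 1/n) 0 - max (M - ((j+1:ℕ):ℝ)/n + 1/n) 0) := by
          apply Finset.sum_le_sum
          intro j _
          have e : M - ((j+1:ℕ):ℝ)/n + 1/n = M - (j:ℝ)/n := by push_cast; ring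
          rw [e]
          exact key_ub (M - (j:ℝ)/n) (S j) (1/n) hcn (hS0 j) (hSzero j)
      _ = max (M - ((0:ℕ):ℝ)/n + 1/n) 0 - max (M - ((n:ℕ):ℝ)/n + 1/n) 0 := tele
      _ ≤ M + 1/n := by
          have e0 : max (M - ((0:ℕ):ℝ)/n + 1/n) 0 = M + 1/n := by
            rw [max_eq_left (by rw [Nat.cast_zero, zero_div]; linarith)]
            rw [Nat.cast_zero, zero_div]; ring
          rw [e0]
          have := le_max_right (M - ((n:ℕ):ℝ)/n + 1/n) (0:ℝ)
          linarith
  have hsum : (∑ j ∈ Finset.range n,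
      (max (∑ t : Fin T, max (x t - (j : ℝ) / n) 0) 0
        - max ((∑ t : Fin T, max (x t - (j : ℝ) / n) 0) - 1 / n) 0))
      = ∑ j ∈ Finset.range n, (max (S j) 0 - max (S j - 1/n) 0) := rfl
  rw [abs_le, hsum]
  constructor <;> linarith
end

section
/- Let n ≥ 1, T ≥ 1, and fix j ∈ {0, 1, …, n−1}. For x ∈ ℝ^T define S_j(x) = Σ_{t=1}^T ReLU(x_t − j/n) and h₂(j)(x) = ReLU(S_j(x)) − ReLU(S_j(x) − 1/n). Then: (1) if h₂(j)(x) > 0, there exists t with x_t > j/n; and (2) if there exists t with x_t > (j+1)/n, then h₂(j)(x) = 1/n. -/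
open scoped BigOperators

/-- with `S_j(x) = Σ_t ReLU(x_t − j/n)` and
`h₂(j)(x) = ReLU(S_j(x)) − ReLU(S_j(x) − 1/n)`:
(1) if `h₂(j)(x) > 0` then some coordinate exceeds `j/n`;
(2) if some coordinate exceeds `(j+1)/n` then `h₂(j)(x) = 1/n`. -/
theorem relu_grid_unit_properties (n T : ℕ) (hn : 1 ≤ n) (hT : 1 ≤ T)
    (j : ℕ) (hj : j < n) (x : Fin T → ℝ) :
    (0 < max (∑ t : Fin T, max (x t - (j : ℝ) / n) 0) 0
        - max ((∑ t : Fin T, max (x t - (j : ℝ) / n) 0) - 1 / n) 0 →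
      ∃ t : Fin T, (j : ℝ) / n < x t) ∧
    ((∃ t : Fin T, ((j : ℝ) + 1) / n < x t) →
      max (∑ t : Fin T, max (x t - (j : ℝ) / n) 0) 0
        - max ((∑ t : Fin T, max (x t - (j : ℝ) / n) 0) - 1 / n) 0 = 1 / n) := by
  set S := ∑ t : Fin T, max (x t - (j : ℝ) / n) 0 with hS
  have hS0 : 0 ≤ S := Finset.sum_nonneg fun t _ => le_max_right _ _
  have hmaxS : max S 0 = S := max_eq_left hS0
  constructor
  · intro h
    rw [hmaxS] at h
    have hSpos : 0 < S := lt_of_le_of_lt (le_max_right _ _) (by linarith)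
    obtain ⟨t, _, ht⟩ : ∃ t ∈ Finset.univ, 0 < max (x t - (j : ℝ) / n) 0 := by
      by_contra hc
      push_neg at hc
      have : S ≤ 0 := Finset.sum_nonpos fun t ht => hc t ht
      linarith
    refine ⟨t, ?_⟩
    have : 0 < x t - (j : ℝ) / n := by
      rcases lt_max_iff.mp ht with h1 | h1
      · exact h1
      · exact absurd h1 (lt_irrefl 0)
    linarith
  · rintro ⟨t, ht⟩
    have hn' : (0 : ℝ) < n := by exact_mod_cast hn
    have hkey : (1 : ℝ) / n ≤ max (x t - (j : ℝ) / n) 0 := by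
      have : (1 : ℝ) / n ≤ x t - (j : ℝ) / n := by
        rw [add_div] at ht; linarith
      exact le_trans this (le_max_left _ _)
    have hS1 : (1 : ℝ) / n ≤ S := by
      calc (1 : ℝ) / n ≤ max (x t - (j : ℝ) / n) 0 := hkey
        _ ≤ S := Finset.single_le_sum (f := fun t => max (x t - (j : ℝ) / n) 0) (fun t _ => le_max_right _ _) (Finset.mem_univ t)
    rw [hmaxS, max_eq_left (by linarith)]
    ring
end

section
/- Let N ≥ 1, β ≥ 1, and let a : {1,…,N} → [0,1] with a* = min_{1≤t≤N} a_t. Then 0 ≤ (Σ_{t=1}^N a_t e^{−β a_t}) / (Σ_{t=1}^N e^{−β a_t}) − a* ≤ (N − 1) / (e β), where e is Euler's number. -/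
/-!
Subtracting the minimum `a*` from every value shifts the Gibbs mean by `a*`, so one may assume
`a ≥ 0` with `a t₀ = 0`. Then the partition function is at least `e⁰ = 1`, and each of the other
`N - 1` terms `a t e^{-β a t}` of the numerator is at most `max_x x e^{-β x} = 1 / (e β)`.
-/

open Real Finset

theorem Real.mul_exp_neg_mul_le {β : ℝ} (hβ : 0 < β) (x : ℝ) :
    x * exp (-β * x) ≤ 1 / (exp 1 * β) := by
  calc x * exp (-β * x) = (β * x) * exp (-(β * x)) / β := by field_simp
    _ ≤ exp (-1) / β := by gcongr; exact mul_exp_neg_le_exp_neg_one _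
    _ = 1 / (exp 1 * β) := by rw [exp_neg]; field_simp

section GibbsMean

variable {ι : Type*} [Fintype ι]

noncomputable def gibbsMean (β : ℝ) (a : ι → ℝ) : ℝ :=
  (∑ i, a i * exp (-β * a i)) / ∑ i, exp (-β * a i)

theorem gibbsMean_sub_const [Nonempty ι] (β : ℝ) (a : ι → ℝ) (c : ℝ) :
    gibbsMean β (fun i => a i - c) = gibbsMean β a - c := by
  have hZ : 0 < ∑ i, exp (-β * a i) := sum_pos (fun i _ => exp_pos _) univ_nonempty
  have hshift : ∀ i, exp (-β * (a i - c)) = exp (-β * a i) * exp (β * c) := fun i => by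
    rw [← exp_add]; ring_nf
  simp only [gibbsMean, hshift, ← mul_assoc, ← sum_mul, mul_div_mul_right _ _ (exp_pos _).ne']
  rw [eq_sub_iff_add_eq, div_add' _ _ _ hZ.ne', mul_sum, ← sum_add_distrib]
  exact congrArg (· / _) (sum_congr rfl fun i _ => by ring)

theorem gibbsMean_nonneg (β : ℝ) {a : ι → ℝ} (ha : 0 ≤ a) : 0 ≤ gibbsMean β a :=
  div_nonneg (sum_nonneg fun i _ => mul_nonneg (ha i) (exp_pos _).le)
    (sum_nonneg fun _ _ => (exp_pos _).le)

theorem gibbsMean_le_of_eq_zero {β : ℝ} (hβ : 0 < β) {a : ι → ℝ} (ha : 0 ≤ a) {i₀ : ι}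
    (hi₀ : a i₀ = 0) : gibbsMean β a ≤ (Fintype.card ι - 1) / (exp 1 * β) := by
  classical
  have hZ : 1 ≤ ∑ i, exp (-β * a i) := by
    calc (1 : ℝ) = exp (-β * a i₀) := by rw [hi₀, mul_zero, exp_zero]
      _ ≤ ∑ i, exp (-β * a i) :=
        single_le_sum (f := fun i => exp (-β * a i)) (fun _ _ => (exp_pos _).le) (mem_univ i₀)
  have hnum : ∑ i, a i * exp (-β * a i) ≤ (Fintype.card ι - 1) / (exp 1 * β) := by
    have hterm₀ : a i₀ * exp (-β * a i₀) = 0 := by rw [hi₀, zero_mul]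
    rw [← sum_erase (f := fun i => a i * exp (-β * a i)) univ hterm₀]
    calc _ ≤ #(univ.erase i₀) • (1 / (exp 1 * β)) :=
          sum_le_card_nsmul _ _ _ fun i _ => mul_exp_neg_mul_le hβ (a i)
      _ = (Fintype.card ι - 1) / (exp 1 * β) := by
        rw [card_erase_of_mem (mem_univ i₀), card_univ, nsmul_eq_mul,
          Nat.cast_sub (Fintype.card_pos_iff.2 ⟨i₀⟩), Nat.cast_one, mul_one_div]
  exact (div_le_self (sum_nonneg fun i _ => mul_nonneg (ha i) (exp_pos _).le) hZ).trans hnum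

end GibbsMean

theorem gibbs_mean_close_to_min_general (N : ℕ) (β : ℝ) (hβ : 1 ≤ β)
    (a : Fin N → ℝ) (astar : ℝ) (hstar : IsLeast (Set.range a) astar) :
    0 ≤ (∑ t : Fin N, a t * Real.exp (-β * a t)) / (∑ t : Fin N, Real.exp (-β * a t)) - astar ∧
    (∑ t : Fin N, a t * Real.exp (-β * a t)) / (∑ t : Fin N, Real.exp (-β * a t)) - astar
      ≤ ((N : ℝ) - 1) / (Real.exp 1 * β) := by
  obtain ⟨t₀, ht₀⟩ := hstar.1
  have : Nonempty (Fin N) := ⟨t₀⟩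
  have hshifted : 0 ≤ fun t => a t - astar := fun t => sub_nonneg.2 (hstar.2 ⟨t, rfl⟩)
  change 0 ≤ gibbsMean β a - astar ∧ gibbsMean β a - astar ≤ _
  rw [← gibbsMean_sub_const]
  refine ⟨gibbsMean_nonneg β hshifted, ?_⟩
  simpa using gibbsMean_le_of_eq_zero (by linarith) hshifted (i₀ := t₀) (sub_eq_zero.2 ht₀)

/-- the Gibbs (softmin-weighted) mean of values `a₁, …, a_N ∈ [0,1]` at
inverse temperature `β ≥ 1` exceeds the minimum `a*` by at most `(N − 1)/(e β)`. -/
theorem gibbs_mean_close_to_min (N : ℕ) (hN : 1 ≤ N) (β : ℝ) (hβ : 1 ≤ β)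
    (a : Fin N → ℝ) (ha : ∀ t, a t ∈ Set.Icc (0 : ℝ) 1)
    (astar : ℝ) (hstar : IsLeast (Set.range a) astar) :
    0 ≤ (∑ t : Fin N, a t * Real.exp (-β * a t)) / (∑ t : Fin N, Real.exp (-β * a t)) - astar ∧
    (∑ t : Fin N, a t * Real.exp (-β * a t)) / (∑ t : Fin N, Real.exp (-β * a t)) - astar
      ≤ ((N : ℝ) - 1) / (Real.exp 1 * β) :=
  gibbs_mean_close_to_min_general N β hβ a astar hstar
end
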